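/- arXiv:1910.04902 — 6 statements merged into one kernel-verified Lean document; each statement's English description precedes it below -/
import Mathlib

section
/- Let $(\alpha_n)_{n\geq 1}$ be a sequence of reals with $0 < c < \alpha_n < c'$ for all $n$, and define $\beta_k^n = \alpha_k \alpha_{k+1} \cdots \alpha_{k+n-1}$ and $d_n = \inf_{k\geq 1}\beta_k^n$. If $\sup_{k\geq 1}\sum_{n=1}^\infty (\beta_k^n)^{-1} < \infty$, then $\limsup_{n\to\infty}(d_n)^{-1/n} < 1$. -/
/-!
Let `T_k(n) = ∑_{m > n} (β_k^m)⁻¹`. The cocycle identity `β_k^{n+m} = β_k^n β_{k+n}^m` gives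
`T_k(n) ≤ M (β_k^n)⁻¹ = M (T_k(n-1) - T_k(n))`, so the tails decay geometrically with ratio
`M / (M + 1)`, uniformly in `k`. Hence `(d_{n+1})⁻¹ ≤ M (M / (M + 1))^n`, and the `n`-th roots
have `limsup` at most `M / (M + 1) < 1`.
-/

open Filter Finset

/-- `beta α k n = α_k ⋯ α_{k+n-1}`. -/
noncomputable def beta (α : ℕ → ℝ) (k n : ℕ) : ℝ := ∏ j ∈ Finset.range n, α (k + j)

/-- `d_n = inf_k β_k^n`. -/
noncomputable def dseq (α : ℕ → ℝ) (n : ℕ) : ℝ := ⨅ k, beta α k n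

open Topology

theorem tendsto_const_rpow_inv_natCast {C : ℝ} (hC : 0 < C) :
    Tendsto (fun n : ℕ => C ^ (n : ℝ)⁻¹) atTop (𝓝 1) := by
  simpa using tendsto_const_nhds.rpow
    (tendsto_inv_atTop_zero.comp tendsto_natCast_atTop_atTop) (Or.inl hC.ne')

theorem limsup_rpow_inv_le_of_le_mul_pow {u : ℕ → ℝ} (hu : ∀ n, 0 ≤ u n) {C θ : ℝ}
    (hC : 0 < C) (hθ : 0 < θ) (h : ∀ n, u (n + 1) ≤ C * θ ^ n) :
    limsup (fun n => u n ^ (n : ℝ)⁻¹) atTop ≤ θ := by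
  have hlim : Tendsto (fun n : ℕ => (C / θ) ^ (n : ℝ)⁻¹ * θ) atTop (𝓝 θ) := by
    simpa using (tendsto_const_rpow_inv_natCast (div_pos hC hθ)).mul_const θ
  have hle : ∀ᶠ n in atTop, u n ^ (n : ℝ)⁻¹ ≤ (C / θ) ^ (n : ℝ)⁻¹ * θ := by
    filter_upwards [eventually_ge_atTop 1] with n hn
    obtain ⟨m, rfl⟩ := Nat.exists_eq_add_of_le' hn
    have hu' : u (m + 1) ≤ C / θ * θ ^ (m + 1) := by
      rw [pow_succ, mul_comm (θ ^ m), ← mul_assoc, div_mul_cancel₀ _ hθ.ne']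
      exact h m
    calc u (m + 1) ^ ((m + 1 : ℕ) : ℝ)⁻¹
        ≤ (C / θ * θ ^ (m + 1)) ^ ((m + 1 : ℕ) : ℝ)⁻¹ :=
          Real.rpow_le_rpow (hu _) hu' (by positivity)
      _ = (C / θ) ^ ((m + 1 : ℕ) : ℝ)⁻¹ * θ := by
          rw [Real.mul_rpow (by positivity) (by positivity),
            Real.pow_rpow_inv_natCast hθ.le (Nat.succ_ne_zero m)]
  calc limsup (fun n => u n ^ (n : ℝ)⁻¹) atTop
      ≤ limsup (fun n : ℕ => (C / θ) ^ (n : ℝ)⁻¹ * θ) atTop :=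
        limsup_le_limsup hle (isCoboundedUnder_le_of_le atTop fun n => Real.rpow_nonneg (hu n) _)
          hlim.isBoundedUnder_le
    _ = θ := hlim.limsup_eq

theorem tsum_nat_add_succ_le_div_mul {f : ℕ → ℝ} (hf : Summable f) {M : ℝ} (hM : 0 ≤ M)
    (h : ∀ n, ∑' m, f (m + (n + 1)) ≤ M * f n) (n : ℕ) :
    ∑' m, f (m + (n + 1)) ≤ M / (M + 1) * ∑' m, f (m + n) := by
  have hsplit : ∑' m, f (m + n) = f n + ∑' m, f (m + (n + 1)) := by
    rw [((summable_nat_add_iff n).mpr hf).tsum_eq_zero_add]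
    simp only [zero_add, add_right_comm _ 1 n, add_assoc]
  rw [hsplit, div_mul_eq_mul_div, le_div_iff₀ (by positivity)]
  linarith [h n]

theorem le_pow_mul_tsum_of_tsum_nat_add_le {f : ℕ → ℝ} (hf : Summable f) (hf0 : ∀ n, 0 ≤ f n)
    {M : ℝ} (hM : 0 ≤ M) (h : ∀ n, ∑' m, f (m + (n + 1)) ≤ M * f n) (n : ℕ) :
    f n ≤ (M / (M + 1)) ^ n * ∑' m, f m := by
  have htail : ∀ n, ∑' m, f (m + n) ≤ (M / (M + 1)) ^ n * ∑' m, f m := by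
    intro n
    induction n with
    | zero => simp
    | succ n ih =>
      calc ∑' m, f (m + (n + 1)) ≤ M / (M + 1) * ∑' m, f (m + n) :=
            tsum_nat_add_succ_le_div_mul hf hM h n
        _ ≤ M / (M + 1) * ((M / (M + 1)) ^ n * ∑' m, f m) := by gcongr
        _ = (M / (M + 1)) ^ (n + 1) * ∑' m, f m := by ring
  calc f n = f (0 + n) := by rw [zero_add]
    _ ≤ ∑' m, f (m + n) :=
        ((summable_nat_add_iff n).mpr hf).le_tsum 0 fun m _ => hf0 _
    _ ≤ _ := htail n

theorem inv_iInf_le_of_forall_inv_le {ι : Type*} [Nonempty ι] {x : ι → ℝ} (hx : ∀ i, 0 < x i)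
    {C : ℝ} (h : ∀ i, (x i)⁻¹ ≤ C) : (⨅ i, x i)⁻¹ ≤ C := by
  obtain ⟨i⟩ := ‹Nonempty ι›
  have hC : 0 < C := (inv_pos.mpr (hx i)).trans_le (h i)
  have hle : C⁻¹ ≤ ⨅ i, x i := le_ciInf fun i => (inv_le_comm₀ (hx i) hC).mp (h i)
  exact (inv_le_comm₀ ((inv_pos.mpr hC).trans_le hle) hC).mpr hle

section
variable {α : ℕ → ℝ}

theorem beta_add (k a b : ℕ) : beta α k (a + b) = beta α k a * beta α (k + a) b := by
  simp only [beta, prod_range_add, add_assoc]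

theorem beta_pos (hα : ∀ n, 0 < α n) (k n : ℕ) : 0 < beta α k n :=
  prod_pos fun _ _ => hα _

theorem dseq_nonneg (hα : ∀ n, 0 < α n) (n : ℕ) : 0 ≤ dseq α n :=
  Real.iInf_nonneg fun k => (beta_pos hα k n).le

variable {M : ℝ}

theorem tsum_inv_beta_tail_le (hα : ∀ n, 0 < α n) (hM : ∀ k, ∑' n, (beta α k (n + 1))⁻¹ ≤ M)
    (k n : ℕ) :
    ∑' m, (beta α k (m + (n + 1) + 1))⁻¹ ≤ M * (beta α k (n + 1))⁻¹ := by
  have hfactor : ∀ m, (beta α k (m + (n + 1) + 1))⁻¹ =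
      (beta α k (n + 1))⁻¹ * (beta α (k + (n + 1)) (m + 1))⁻¹ := fun m => by
    rw [show m + (n + 1) + 1 = (n + 1) + (m + 1) by ring, beta_add, mul_inv]
  rw [tsum_congr hfactor, tsum_mul_left, mul_comm]
  exact mul_le_mul_of_nonneg_right (hM _) (inv_nonneg.mpr (beta_pos hα _ _).le)

theorem inv_beta_le (hα : ∀ n, 0 < α n) (hM : ∀ k, ∑' n, (beta α k (n + 1))⁻¹ ≤ M)
    (hsum : ∀ k, Summable fun n => (beta α k (n + 1))⁻¹) (k n : ℕ) :
    (beta α k (n + 1))⁻¹ ≤ M * (M / (M + 1)) ^ n := by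
  have hinv_nonneg : ∀ n, 0 ≤ (beta α k (n + 1))⁻¹ := fun n => inv_nonneg.mpr (beta_pos hα _ _).le
  have hM0 : 0 ≤ M := (tsum_nonneg hinv_nonneg).trans (hM k)
  calc (beta α k (n + 1))⁻¹
      ≤ (M / (M + 1)) ^ n * ∑' m, (beta α k (m + 1))⁻¹ :=
        le_pow_mul_tsum_of_tsum_nat_add_le (hsum k) hinv_nonneg hM0 (tsum_inv_beta_tail_le hα hM k) n
    _ ≤ M * (M / (M + 1)) ^ n := by rw [mul_comm M]; gcongr; exact hM k

end

theorem stmt0_general (c c' : ℝ) (α : ℕ → ℝ) (hc : 0 < c)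
    (hα : ∀ n, α n ∈ Set.Ioo c c')
    (hsum : ∀ k, Summable fun n => (beta α k (n + 1))⁻¹)
    (M : ℝ) (hM : ∀ k, (∑' n, (beta α k (n + 1))⁻¹) ≤ M) :
    Filter.limsup (fun n : ℕ => (dseq α n)⁻¹ ^ ((n : ℝ)⁻¹)) Filter.atTop < 1 := by
  have hαpos : ∀ n, 0 < α n := fun n => hc.trans (hα n).1
  have hMpos : 0 < M := by
    simpa using (inv_pos.mpr (beta_pos hαpos 0 1)).trans_le (inv_beta_le hαpos hM hsum 0 0)
  have hdseq : ∀ n, (dseq α (n + 1))⁻¹ ≤ M * (M / (M + 1)) ^ n := fun n =>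
    inv_iInf_le_of_forall_inv_le (fun k => beta_pos hαpos k _) fun k => inv_beta_le hαpos hM hsum k n
  calc _ ≤ M / (M + 1) :=
        limsup_rpow_inv_le_of_le_mul_pow (fun n => inv_nonneg.mpr (dseq_nonneg hαpos n)) hMpos
          (by positivity) hdseq
    _ < 1 := (div_lt_one (by linarith)).mpr (by linarith)

theorem stmt0 (c c' : ℝ) (α : ℕ → ℝ) (hc : 0 < c) (hcc : c < c')
    (hα : ∀ n, α n ∈ Set.Ioo c c')
    (hsum : ∀ k, Summable fun n => (beta α k (n + 1))⁻¹)
    (M : ℝ) (hM : ∀ k, (∑' n, (beta α k (n + 1))⁻¹) ≤ M) :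
    Filter.limsup (fun n : ℕ => (dseq α n)⁻¹ ^ ((n : ℝ)⁻¹)) Filter.atTop < 1 :=
  stmt0_general c c' α hc hα hsum M hM
end

section
/- Let $X$ be a separable Banach space and $T : X \to X$ a continuous linear operator. Suppose $T$ is onto, satisfies the splitting $X = \mathrm{Ker}(T^n)\oplus E_n$ with $T(E_{n+1}) = E_n$, $\bigcup_{n\geq 0}\mathrm{Ker}(T^n)$ is dense in $X$, $p(T^n) > 0$ for all $n$, and $\lim_{n\to\infty}(p(T^n))^{-1/n} < 1$. Then for every $x \in \bigcup_n \mathrm{Ker}(T^n)$ there is a right inverse sequence $(S^n(x))$ with $T^n(S^n(x)) = x$ and $\|S^n(x)\| \leq \|x\|/p(T^n)$, and the series $\sum_{n\geq 0}T^n(x)$ and $\sum_{n\geq 0}S^n(x)$ are unconditionally convergent; hence $T$ satisfies the frequent hypercyclicity/chaos criterion (is frequently hypercyclic and Devaney chaotic). -/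
open Filter

open Classical in
/-- A continuous map is frequently hypercyclic if some orbit visits every nonempty
open set with positive lower density. -/
noncomputable def FrequentlyHypercyclic {X : Type*} [TopologicalSpace X] (T : X → X) : Prop :=
  ∃ x : X, ∀ U : Set X, IsOpen U → U.Nonempty →
    0 < Filter.liminf
      (fun N : ℕ => (((Finset.range N).filter (fun k => T^[k] x ∈ U)).card : ℝ) / (N : ℝ))
      Filter.atTop

/-- Devaney chaos: topological transitivity together with a dense set of periodic points. -/
def DevaneyChaotic {X : Type*} [TopologicalSpace X] (T : X → X) : Prop :=
  (∀ U V : Set X, IsOpen U → IsOpen V → U.Nonempty → V.Nonempty →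
      ∃ n : ℕ, ((T^[n]) '' U ∩ V).Nonempty) ∧
    Dense {x : X | ∃ n : ℕ, 0 < n ∧ T^[n] x = x}

/-!
For `x` in the dense set `⋃ n, ker (T ^ n)`, inverting `T ^ n` on `E n` gives a backward orbit
(`s 0 = x`, `T (s (n + 1)) = s n`) with `‖s n‖ ≤ ‖x‖ / p(T ^ n) ≤ C rⁿ` for some `r < 1`. With such
geometric decay the frequent hypercyclicity criterion can be run by hand. The sets
`A p = {n | separatedLevel n = p}` have positive lower density, and distinct `n ∈ A p`, `m ∈ A q`
are at distance at least `p + q`. Let slot `p` carry a point `y` of a dense sequence (each point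
in infinitely many slots) with `T ^ p y = 0` and a backward orbit `w p` bounded by `p rⁿ`. For
`v = ∑ n, w (separatedLevel n) n` and `k ∈ A p`, the terms `n < k` are killed by `T ^ k`, the term
`n = k` becomes `y`, and the terms `n > k` contribute at most `∑ m ≥ p, m rᵐ`. So the orbit of `v`
comes close to every point of the dense sequence along a set of positive lower density.
Periodic points near `x`, where `T ^ N x = 0`, are `∑ k, s (k N)`.
-/

open Finset

/-- The block `[s², (s + 1)²)` belongs to `p = v₂(s) + 1`: its points `≡ s² + p (mod 2p)` lying
at least `p` below `(s + 1)²` get level `p`, all other points level `0`. -/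
def separatedLevel (n : ℕ) : ℕ :=
  let s := Nat.sqrt n
  let p := padicValNat 2 s + 1
  if s ^ 2 + p ≤ n ∧ n + p ≤ (s + 1) ^ 2 ∧ 2 * p ∣ n - s ^ 2 - p then p else 0

lemma separatedLevel_spec {n : ℕ} (h : separatedLevel n ≠ 0) :
    separatedLevel n = padicValNat 2 (Nat.sqrt n) + 1 ∧
      Nat.sqrt n ^ 2 + separatedLevel n ≤ n ∧ n + separatedLevel n ≤ (Nat.sqrt n + 1) ^ 2 ∧
      2 * separatedLevel n ∣ n - Nat.sqrt n ^ 2 - separatedLevel n := by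
  dsimp only [separatedLevel] at h ⊢
  split_ifs at h ⊢ with hn
  · exact ⟨rfl, hn⟩
  · exact absurd rfl h

lemma separatedLevel_le (n : ℕ) : separatedLevel n ≤ n := by
  by_cases h : separatedLevel n = 0
  · simp [h]
  · have := (separatedLevel_spec h).2.1
    omega

lemma add_separatedLevel_add_le {n m : ℕ} (hn : separatedLevel n ≠ 0)
    (hm : separatedLevel m ≠ 0) (hnm : n < m) :
    n + separatedLevel n + separatedLevel m ≤ m := by
  obtain ⟨hpn, hn₁, hn₂, hn₃⟩ := separatedLevel_spec hn
  obtain ⟨hpm, hm₁, hm₂, hm₃⟩ := separatedLevel_spec hm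
  -- in the same block, `n ≡ m (mod 2p)`; otherwise the gap below `(√n + 1)²` separates them
  rcases (Nat.sqrt_le_sqrt hnm.le).eq_or_lt with hs | hs
  · rw [← hs] at hpm hm₁ hm₃
    rw [← hpm] at hpn
    rw [hpn] at hn₁ hn₃
    have hdvd : 2 * separatedLevel m ∣ m - n := by
      have := Nat.dvd_sub hm₃ hn₃
      rwa [show m - Nat.sqrt n ^ 2 - separatedLevel m - (n - Nat.sqrt n ^ 2 - separatedLevel m)
        = m - n by omega] at this
    have := Nat.le_of_dvd (by omega) hdvd
    omega
  · have := Nat.pow_le_pow_left (show Nat.sqrt n + 1 ≤ Nat.sqrt m from hs) 2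
    omega

/-- The points of level `p` in the block of `s = 2 ^ (p - 1) * (2 * i + 1)`; using only `j < i`
yields about `I² / 2` of them below `(2 ^ p * I) ^ 2`. -/
def blockPoint (p i j : ℕ) : ℕ := (2 ^ (p - 1) * (2 * i + 1)) ^ 2 + p + 2 * p * j

section blockPoint

variable {p i j : ℕ}

lemma blockPoint_add_le (hp : 1 ≤ p) (hj : j < i) :
    blockPoint p i j + p ≤ (2 ^ (p - 1) * (2 * i + 1) + 1) ^ 2 := by
  have hpi : p * i ≤ 2 ^ (p - 1) * (2 * i + 1) := by
    have := Nat.lt_two_pow_self (n := p - 1)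
    exact Nat.mul_le_mul (by omega) (by omega)
  have hpj : p * (j + 1) ≤ p * i := Nat.mul_le_mul_left _ hj
  unfold blockPoint
  nlinarith

lemma sqrt_blockPoint (hp : 1 ≤ p) (hj : j < i) :
    Nat.sqrt (blockPoint p i j) = 2 ^ (p - 1) * (2 * i + 1) := by
  have := blockPoint_add_le hp hj
  unfold blockPoint at this ⊢
  rw [add_assoc]
  exact Nat.sqrt_add_eq' _ (by nlinarith)

lemma separatedLevel_blockPoint (hp : 1 ≤ p) (hj : j < i) :
    separatedLevel (blockPoint p i j) = p := by
  have hval : padicValNat 2 (2 ^ (p - 1) * (2 * i + 1)) + 1 = p := by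
    rw [padicValNat.mul (by positivity) (by omega), padicValNat.prime_pow,
      padicValNat.eq_zero_of_not_dvd (by omega)]
    omega
  have hle := blockPoint_add_le hp hj
  dsimp only [separatedLevel]
  rw [sqrt_blockPoint hp hj, hval,
    if_pos ⟨by unfold blockPoint; omega, hle, j, by unfold blockPoint; omega⟩]

lemma blockPoint_injective (hp : 1 ≤ p) {i' j' : ℕ} (hj : j < i) (hj' : j' < i')
    (h : blockPoint p i j = blockPoint p i' j') : i = i' ∧ j = j' := by
  have hs := congrArg Nat.sqrt h
  rw [sqrt_blockPoint hp hj, sqrt_blockPoint hp hj'] at hs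
  have hi : i = i' := by
    have := Nat.eq_of_mul_eq_mul_left (by positivity) hs
    omega
  subst hi
  unfold blockPoint at h
  exact ⟨rfl, Nat.eq_of_mul_eq_mul_left (by omega : 0 < 2 * p) (by omega)⟩

end blockPoint

lemma exists_separatedLevel_eq {p : ℕ} (hp : 1 ≤ p) (B : ℕ) :
    ∃ n, B ≤ n ∧ separatedLevel n = p := by
  refine ⟨blockPoint p (B + 1) 0, ?_, separatedLevel_blockPoint hp (by omega)⟩
  have : B + 1 ≤ 2 ^ (p - 1) * (2 * (B + 1) + 1) := by
    have := Nat.one_le_two_pow (n := p - 1)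
    nlinarith
  unfold blockPoint
  nlinarith

lemma le_two_mul_card_separatedLevel {p : ℕ} (hp : 1 ≤ p) (N : ℕ) :
    (Nat.sqrt N / 2 ^ p) * (Nat.sqrt N / 2 ^ p - 1) ≤
      2 * #{n ∈ range N | separatedLevel n = p} := by
  set I := Nat.sqrt N / 2 ^ p
  have hcard : ((range I).sigma fun i => range i).card * 2 = I * (I - 1) := by
    rw [card_sigma]
    simpa using sum_range_id_mul_two I
  have hle : ((range I).sigma fun i => range i).card ≤ #{n ∈ range N | separatedLevel n = p} := by
    refine card_le_card_of_injOn (fun ij => blockPoint p ij.1 ij.2) ?_ ?_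
    · rintro ⟨i, j⟩ hij
      simp only [coe_sigma, Set.mem_sigma_iff, mem_coe, mem_range] at hij
      simp only [coe_filter, Set.mem_ofPred_eq, mem_range]
      refine ⟨?_, separatedLevel_blockPoint hp hij.2⟩
      have h1 : 2 ^ (p - 1) * (2 * i + 1) + 1 ≤ 2 ^ p * I := by
        have : 2 ^ p = 2 ^ (p - 1) * 2 := by rw [← pow_succ, Nat.sub_add_cancel hp]
        have := Nat.one_le_two_pow (n := p - 1)
        nlinarith [hij.1]
      have h2 : (2 ^ p * I) ^ 2 ≤ N :=
        (Nat.pow_le_pow_left (Nat.mul_div_le _ _) 2).trans (Nat.sqrt_le' N)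
      have := blockPoint_add_le hp hij.2
      have := Nat.pow_le_pow_left h1 2
      omega
    · rintro ⟨i, j⟩ hij ⟨i', j'⟩ hij' h
      simp only [coe_sigma, Set.mem_sigma_iff, mem_coe, mem_range] at hij hij'
      obtain ⟨rfl, rfl⟩ := blockPoint_injective hp hij.2 hij'.2 h
      rfl
  omega

lemma eventually_le_mul_card_separatedLevel {p : ℕ} (hp : 1 ≤ p) :
    ∀ᶠ N in atTop, N ≤ 8 * 4 ^ p * #{n ∈ range N | separatedLevel n = p} := by
  filter_upwards [eventually_ge_atTop ((3 * 2 ^ p) ^ 2)] with N hN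
  have hc := le_two_mul_card_separatedLevel hp N
  set I := Nat.sqrt N / 2 ^ p
  have hI : 3 ≤ I := by
    rw [Nat.le_div_iff_mul_le (by positivity), Nat.le_sqrt']
    simpa [mul_comm] using hN
  have hN' : N < (2 ^ p * (I + 1)) ^ 2 := by
    have h2 : Nat.sqrt N + 1 ≤ 2 ^ p * (I + 1) := Nat.lt_mul_div_succ _ (by positivity)
    exact (Nat.lt_succ_sqrt' N).trans_le (Nat.pow_le_pow_left h2 2)
  have h4 : (I + 1) ^ 2 ≤ 4 * (I * (I - 1)) := by
    obtain ⟨K, hK⟩ : ∃ K, I = K + 1 := ⟨I - 1, by omega⟩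
    rw [hK, Nat.add_sub_cancel]
    nlinarith
  calc N ≤ (2 ^ p) ^ 2 * (I + 1) ^ 2 := by rw [← mul_pow]; exact hN'.le
    _ ≤ (2 ^ p) ^ 2 * (8 * #{n ∈ range N | separatedLevel n = p}) := by gcongr; omega
    _ = 8 * 4 ^ p * #{n ∈ range N | separatedLevel n = p} := by
      rw [← pow_mul, mul_comm p 2, pow_mul]; ring

lemma liminf_card_filter_div_pos {P Q : ℕ → Prop} [DecidablePred P] [DecidablePred Q]
    (hPQ : ∀ k, P k → Q k) {a : ℕ} (h : ∀ᶠ N in atTop, N ≤ a * #{k ∈ range N | P k}) :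
    0 < liminf (fun N : ℕ => (#{k ∈ range N | Q k} : ℝ) / N) atTop := by
  have ha : 0 < a := by
    obtain ⟨N, hN, hN0⟩ := (h.and (eventually_gt_atTop 0)).exists
    exact Nat.pos_of_ne_zero fun ha => by simp [ha] at hN; omega
  have hlow : ∀ᶠ N : ℕ in atTop, (a : ℝ)⁻¹ ≤ (#{k ∈ range N | Q k} : ℝ) / N := by
    filter_upwards [h, eventually_gt_atTop 0] with N hN hN0
    have hPQN : #{k ∈ range N | P k} ≤ #{k ∈ range N | Q k} :=
      card_le_card (monotone_filter_right _ fun k _ => hPQ k)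
    rw [le_div_iff₀ (by positivity), inv_mul_le_iff₀ (by positivity)]
    exact_mod_cast hN.trans (Nat.mul_le_mul_left a hPQN)
  have hbdd : IsBoundedUnder (· ≤ ·) atTop fun N : ℕ => (#{k ∈ range N | Q k} : ℝ) / N :=
    isBoundedUnder_of ⟨1, fun N => div_le_one_of_le₀
      (by exact_mod_cast (card_filter_le _ _).trans (card_range N).le) (Nat.cast_nonneg _)⟩
  exact (inv_pos.2 (Nat.cast_pos.2 ha)).trans_le (le_liminf_of_le hbdd.isCoboundedUnder_ge hlow)

lemma exists_iterate_image_inter_nonempty {α : Type*} [TopologicalSpace α] {f : α → α} {x : α}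
    (h : ∀ U : Set α, IsOpen U → U.Nonempty → ∀ B, ∃ k, B ≤ k ∧ f^[k] x ∈ U)
    {U V : Set α} (hU : IsOpen U) (hV : IsOpen V) (hU' : U.Nonempty) (hV' : V.Nonempty) :
    ∃ n, (f^[n] '' U ∩ V).Nonempty := by
  obtain ⟨a, -, ha⟩ := h U hU hU' 0
  obtain ⟨b, hab, hb⟩ := h V hV hV' a
  refine ⟨b - a, f^[b] x, ⟨f^[a] x, ha, ?_⟩, hb⟩
  rw [← Function.iterate_add_apply, Nat.sub_add_cancel hab]

lemma summable_natCast_mul_pow {r : ℝ} (hr0 : 0 ≤ r) (hr1 : r < 1) :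
    Summable fun n : ℕ => (n : ℝ) * r ^ n :=
  (hasSum_coe_mul_geometric_of_norm_lt_one (by rwa [Real.norm_of_nonneg hr0])).summable

def IsBackwardOrbit {α : Type*} (f : α → α) (x : α) (s : ℕ → α) : Prop :=
  s 0 = x ∧ ∀ n, f (s (n + 1)) = s n

section Operator

variable {𝕜 X : Type*} [NormedField 𝕜] [NormedAddCommGroup X] [NormedSpace 𝕜 X]
  {T : X →L[𝕜] X}

lemma pow_apply_add_of_apply_succ {s : ℕ → X} (hs : ∀ n, T (s (n + 1)) = s n) (n k : ℕ) :
    (T ^ k) (s (n + k)) = s n := by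
  induction k with
  | zero => rfl
  | succ k ih => rw [pow_succ, mul_apply_eq_comp, ← add_assoc, hs, ih]

lemma pow_apply_of_apply_succ {s : ℕ → X} (hs : ∀ n, T (s (n + 1)) = s n) (n : ℕ) :
    (T ^ n) (s n) = s 0 := by
  simpa using pow_apply_add_of_apply_succ hs 0 n

lemma pow_apply_eq_zero_of_le {x : X} {m k : ℕ} (hx : (T ^ m) x = 0) (hmk : m ≤ k) :
    (T ^ k) x = 0 := by
  rw [← Nat.sub_add_cancel hmk, pow_add, mul_apply_eq_comp, hx, map_zero]

/-- The periodic point is `∑ k, s (k * N)`. -/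
lemma exists_pow_apply_eq_self_norm_sub_le [CompleteSpace X] {x : X} {s : ℕ → X}
    (hs : IsBackwardOrbit T x s) {K r : ℝ} (hr0 : 0 ≤ r) (hr1 : r < 1)
    (hK : ∀ n, ‖s n‖ ≤ K * r ^ n) {N : ℕ} (hN : 0 < N) (hx : (T ^ N) x = 0) :
    ∃ z, (T ^ N) z = z ∧ ‖z - x‖ ≤ K * r ^ N / (1 - r) := by
  have hK0 : 0 ≤ K := by simpa using (norm_nonneg _).trans (hK 0)
  have hrN : r ^ N < 1 := pow_lt_one₀ hr0 hr1 hN.ne'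
  have hgeom := hasSum_geometric_of_lt_one (pow_nonneg hr0 N) hrN
  have hbound : ∀ k, ‖s (k * N)‖ ≤ K * (r ^ N) ^ k := fun k => by
    rw [← pow_mul, mul_comm]; exact hK _
  have hsum : Summable fun k => s (k * N) := .of_norm_bounded (hgeom.summable.mul_left K) hbound
  have hshift : ∀ k, (T ^ N) (s ((k + 1) * N)) = s (k * N) := fun k => by
    rw [add_one_mul]; exact pow_apply_add_of_apply_succ hs.2 _ _
  refine ⟨∑' k, s (k * N), ?_, ?_⟩
  · rw [(T ^ N).map_tsum hsum, (hsum.mapL (T ^ N)).tsum_eq_zero_add, zero_mul, hs.1, hx,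
      zero_add]
    exact tsum_congr hshift
  · rw [hsum.tsum_eq_zero_add, zero_mul, hs.1, add_sub_cancel_left]
    calc ‖∑' k, s ((k + 1) * N)‖ ≤ K * r ^ N * (1 - r ^ N)⁻¹ :=
          tsum_of_norm_bounded ((hgeom.mul_left (K * r ^ N))) fun k => by
            simpa [pow_succ, mul_assoc, mul_comm, mul_left_comm] using hbound (k + 1)
      _ ≤ K * r ^ N / (1 - r) := by
        rw [← div_eq_mul_inv]
        gcongr
        simpa using pow_le_pow_of_le_one hr0 hr1.le (Nat.one_le_iff_ne_zero.2 hN.ne')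

lemma dense_setOf_iterate_eq_self [CompleteSpace X] {r : ℝ} (hr0 : 0 ≤ r) (hr1 : r < 1)
    {D : Set X} (hD : Dense D) (hnil : ∀ x ∈ D, ∃ m, (T ^ m) x = 0)
    (horb : ∀ x ∈ D, ∃ s, IsBackwardOrbit T x s ∧ ∃ K, ∀ n, ‖s n‖ ≤ K * r ^ n) :
    Dense {x | ∃ n, 0 < n ∧ (⇑T)^[n] x = x} := by
  refine (hD.mono fun x hx => Metric.mem_closure_iff.2 fun ε hε => ?_).of_closure
  obtain ⟨m, hm⟩ := hnil x hx
  obtain ⟨s, hs, K, hK⟩ := horb x hx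
  have hlim : Tendsto (fun N => K * r ^ N / (1 - r)) atTop (nhds 0) := by
    simpa using ((tendsto_pow_atTop_nhds_zero_of_lt_one hr0 hr1).const_mul K).div_const (1 - r)
  obtain ⟨N, hN, hmN, hN0⟩ :=
    ((hlim.eventually (gt_mem_nhds hε)).and
      ((eventually_ge_atTop m).and (eventually_gt_atTop 0))).exists
  obtain ⟨z, hz, hzx⟩ := exists_pow_apply_eq_self_norm_sub_le hs hr0 hr1 hK hN0
    (pow_apply_eq_zero_of_le hm hmN)
  refine ⟨z, ⟨N, hN0, ?_⟩, ?_⟩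
  · rwa [← FunLike.coe_pow_eq_iterate]
  · rw [dist_comm, dist_eq_norm]; exact hzx.trans_lt hN

noncomputable def separatedSum (w : ℕ → ℕ → X) : X := ∑' n, w (separatedLevel n) n

lemma summable_separated [CompleteSpace X] {w : ℕ → ℕ → X} {r : ℝ} (hr0 : 0 ≤ r) (hr1 : r < 1)
    (hwB : ∀ p n, ‖w p n‖ ≤ p * r ^ n) : Summable fun n => w (separatedLevel n) n := by
  refine .of_norm_bounded (summable_natCast_mul_pow hr0 hr1) fun n => (hwB _ n).trans ?_
  gcongr
  exact_mod_cast separatedLevel_le n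

lemma norm_tsum_sub_le_of_eq_zero {g : ℕ → X} (hg : Summable g) {k m : ℕ} (hkm : k < m)
    (hzero : ∀ n < m, n ≠ k → g n = 0) {b : ℕ → ℝ} (hb : Summable b)
    (hgb : ∀ i, ‖g (i + m)‖ ≤ b i) : ‖∑' n, g n - g k‖ ≤ ∑' i, b i := by
  rw [← hg.sum_add_tsum_nat_add m, sum_eq_single k (fun n hn => hzero n (mem_range.1 hn))
    (fun hk => absurd (mem_range.2 hkm) hk), add_sub_cancel_left]
  exact tsum_of_norm_bounded hb.hasSum hgb

lemma norm_pow_apply_separatedSum_sub_le [CompleteSpace X] {w : ℕ → ℕ → X} {r : ℝ}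
    (hr0 : 0 ≤ r) (hr1 : r < 1) (hw : ∀ p n, T (w p (n + 1)) = w p n)
    (hwB : ∀ p n, ‖w p n‖ ≤ p * r ^ n) (hwT : ∀ p, (T ^ p) (w p 0) = 0)
    {k : ℕ} (hk : separatedLevel k ≠ 0) :
    ‖(T ^ k) (separatedSum w) - w (separatedLevel k) 0‖ ≤
      ∑' i, ((i + separatedLevel k : ℕ) : ℝ) * r ^ (i + separatedLevel k) := by
  set p := separatedLevel k
  have hw0 : ∀ n, w 0 n = 0 := fun n => norm_le_zero_iff.1 (by simpa using hwB 0 n)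
  have hgt : ∀ i, (T ^ k) (w (separatedLevel (i + k)) (i + k)) = w (separatedLevel (i + k)) i :=
    fun i => pow_apply_add_of_apply_succ (hw _) i k
  have hlt : ∀ n < k, (T ^ k) (w (separatedLevel n) n) = 0 := by
    intro n hn
    by_cases hq : separatedLevel n = 0
    · rw [hq, hw0, map_zero]
    · have hsep := add_separatedLevel_add_le hq hk hn
      rw [← Nat.sub_add_cancel hn.le, pow_add, mul_apply_eq_comp, pow_apply_of_apply_succ (hw _)]
      exact pow_apply_eq_zero_of_le (hwT _) (by omega)
  have hzero : ∀ n < k + p, n ≠ k → (T ^ k) (w (separatedLevel n) n) = 0 := by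
    intro n hn hnk
    rcases lt_or_gt_of_ne hnk with hn' | hn'
    · exact hlt n hn'
    · have hq : separatedLevel n = 0 := by
        by_contra hq
        have := add_separatedLevel_add_le hk hq hn'
        omega
      rw [hq, hw0, map_zero]
  have htail : ∀ i, ‖(T ^ k) (w (separatedLevel (i + (k + p))) (i + (k + p)))‖
      ≤ ((i + p : ℕ) : ℝ) * r ^ (i + p) := by
    intro i
    rw [show i + (k + p) = (i + p) + k by omega, hgt]
    have hq : separatedLevel (i + p + k) ≤ i + p := by
      by_cases hq : separatedLevel (i + p + k) = 0
      · omega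
      · have := add_separatedLevel_add_le hk hq (by omega)
        omega
    refine (hwB _ _).trans ?_
    gcongr
  have hbound : Summable fun i => ((i + p : ℕ) : ℝ) * r ^ (i + p) :=
    (summable_nat_add_iff (f := fun n : ℕ => (n : ℝ) * r ^ n) p).2
      (summable_natCast_mul_pow hr0 hr1)
  have h := norm_tsum_sub_le_of_eq_zero ((summable_separated hr0 hr1 hwB).mapL (T ^ k))
    (by omega) hzero hbound htail
  rwa [← (T ^ k).map_tsum (summable_separated hr0 hr1 hwB), pow_apply_of_apply_succ (hw _)] at h

/-- Slot `p` carries `d j`, `j = p.unpair.1`, as soon as `p ≥ m j` and `p ≥ K j`, and `0` before. -/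
lemma exists_scheduled_backward_orbits {r : ℝ} (hr0 : 0 ≤ r) {d : ℕ → X} {m : ℕ → ℕ}
    {s : ℕ → ℕ → X} {K : ℕ → ℝ} (hm : ∀ j, (T ^ m j) (d j) = 0)
    (hs : ∀ j, IsBackwardOrbit T (d j) (s j)) (hK : ∀ j n, ‖s j n‖ ≤ K j * r ^ n) :
    ∃ w : ℕ → ℕ → X, (∀ p n, T (w p (n + 1)) = w p n) ∧ (∀ p n, ‖w p n‖ ≤ p * r ^ n) ∧
      (∀ p, (T ^ p) (w p 0) = 0) ∧ ∀ j B, ∃ p, B ≤ p ∧ w p 0 = d j := by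
  classical
  let admissible (p : ℕ) : Prop := m p.unpair.1 ≤ p ∧ K p.unpair.1 ≤ p
  refine ⟨fun p => if admissible p then s p.unpair.1 else 0, fun p n => ?_, fun p n => ?_,
    fun p => ?_, fun j B => ?_⟩
  · dsimp only
    split_ifs
    · exact (hs _).2 n
    · simp
  · dsimp only
    split_ifs with hp
    · exact (hK _ n).trans (by gcongr; exact hp.2)
    · simp only [Pi.zero_apply, norm_zero]; positivity
  · dsimp only
    split_ifs with hp
    · rw [(hs _).1]; exact pow_apply_eq_zero_of_le (hm _) hp.1
    · simp
  · refine ⟨Nat.pair j (B + m j + ⌈K j⌉₊), (Nat.right_le_pair _ _).trans' (by omega), ?_⟩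
    have hp : admissible (Nat.pair j (B + m j + ⌈K j⌉₊)) := by
      simp only [admissible, Nat.unpair_pair]
      have := Nat.right_le_pair j (B + m j + ⌈K j⌉₊)
      refine ⟨by omega, (Nat.le_ceil _).trans ?_⟩
      exact_mod_cast (by omega : ⌈K j⌉₊ ≤ Nat.pair j (B + m j + ⌈K j⌉₊))
    simp only [if_pos hp, Nat.unpair_pair, (hs j).1]

theorem frequentlyHypercyclic_and_devaneyChaotic_of_dense_backward_orbits [CompleteSpace X]
    [TopologicalSpace.SeparableSpace X] (T : X →L[𝕜] X) {r : ℝ} (hr0 : 0 ≤ r) (hr1 : r < 1)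
    {D : Set X} (hD : Dense D) (hnil : ∀ x ∈ D, ∃ m, (T ^ m) x = 0)
    (horb : ∀ x ∈ D, ∃ s, IsBackwardOrbit T x s ∧ ∃ K, ∀ n, ‖s n‖ ≤ K * r ^ n) :
    FrequentlyHypercyclic T ∧ DevaneyChaotic T := by
  classical
  obtain ⟨d, hdD, hd⟩ : ∃ d : ℕ → X, (∀ j, d j ∈ D) ∧ DenseRange d := by
    obtain ⟨t, htD, htc, htd⟩ := hD.exists_countable_dense_subset
    obtain ⟨d, rfl⟩ := htc.exists_eq_range htd.nonempty
    exact ⟨d, fun j => htD ⟨j, rfl⟩, htd⟩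
  choose m hm using fun j => hnil (d j) (hdD j)
  choose s hs K hK using fun j => horb (d j) (hdD j)
  obtain ⟨w, hw, hwB, hwT, hwd⟩ := exists_scheduled_backward_orbits hr0 hm hs hK
  have hiter : ∀ k y, (⇑T)^[k] y = (T ^ k) y := fun k y => by rw [FunLike.coe_pow_eq_iterate]
  have hvisit : ∀ U : Set X, IsOpen U → U.Nonempty →
      ∃ p, 1 ≤ p ∧ ∀ k, separatedLevel k = p → (T ^ k) (separatedSum w) ∈ U := by
    rintro U hU ⟨u, hu⟩
    obtain ⟨ε, hε, hball⟩ := Metric.isOpen_iff.1 hU u hu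
    obtain ⟨j, hj⟩ := hd.exists_dist_lt u (half_pos hε)
    obtain ⟨B, hB⟩ := ((tendsto_sum_nat_add fun n : ℕ => (n : ℝ) * r ^ n).eventually
      (gt_mem_nhds (half_pos hε))).exists_forall_of_atTop
    obtain ⟨p, hBp, hwp⟩ := hwd j (B + 1)
    refine ⟨p, by omega, fun k hk => hball ?_⟩
    have hclose := norm_pow_apply_separatedSum_sub_le hr0 hr1 hw hwB hwT (k := k) (by omega)
    rw [hk, hwp, ← dist_eq_norm] at hclose
    calc dist ((T ^ k) (separatedSum w)) u
        ≤ dist ((T ^ k) (separatedSum w)) (d j) + dist (d j) u := dist_triangle _ _ _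
      _ < ε / 2 + ε / 2 := add_lt_add_of_le_of_lt (hclose.trans (hB p (by omega)).le)
        (by rwa [dist_comm])
      _ = ε := add_halves ε
  refine ⟨⟨separatedSum w, fun U hU hU' => ?_⟩, fun U V hU hV hU' hV' => ?_,
    dense_setOf_iterate_eq_self hr0 hr1 hD hnil horb⟩
  · obtain ⟨p, hp, hpU⟩ := hvisit U hU hU'
    exact liminf_card_filter_div_pos (fun k hk => by rw [hiter]; exact hpU k hk)
      (eventually_le_mul_card_separatedLevel hp)
  · refine exists_iterate_image_inter_nonempty (x := separatedSum w) (fun W hW hW' B => ?_)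
      hU hV hU' hV'
    obtain ⟨p, hp, hpW⟩ := hvisit W hW hW'
    obtain ⟨k, hBk, hk⟩ := exists_separatedLevel_eq hp B
    exact ⟨k, hBk, by rw [hiter]; exact hpW k hk⟩

end Operator

lemma exists_isBackwardOrbit_mem_of_isCompl {R M : Type*} [Ring R] [AddCommGroup M] [Module R M]
    {T : M →ₗ[R] M} (hT : Function.Surjective T) {E : ℕ → Submodule R M}
    (hcompl : ∀ n, 1 ≤ n → IsCompl (LinearMap.ker (T ^ n)) (E n))
    (hmap : ∀ n, 1 ≤ n → (E (n + 1)).map T = E n) (x : M) :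
    ∃ s, IsBackwardOrbit T x s ∧ ∀ n, 1 ≤ n → s n ∈ E n := by
  have hex : ∀ n, 1 ≤ n → ∃ e ∈ E n, (T ^ n) e = x := by
    intro n hn
    have hrange : LinearMap.range (T ^ n) = ⊤ :=
      LinearMap.range_eq_top.2 (by rw [Module.End.coe_pow]; exact hT.iterate n)
    have htop : (E n).map (T ^ n) = ⊤ :=
      (LinearMap.map_eq_top_iff hrange).2 (hcompl n hn).symm.sup_eq_top
    exact Submodule.mem_map.1 (htop ▸ Submodule.mem_top)
  choose! e he hTe using hex
  refine ⟨fun n => if n = 0 then x else e n, ⟨if_pos rfl, fun n => ?_⟩, fun n hn => ?_⟩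
  · simp only [Nat.add_one_ne_zero, if_false]
    rcases Nat.eq_zero_or_pos n with rfl | hn
    · simpa using hTe 1 le_rfl
    · rw [if_neg hn.ne']
      have hmem : T (e (n + 1)) ∈ E n := hmap n hn ▸ Submodule.mem_map_of_mem (he _ (by omega))
      refine LinearMap.injOn_of_disjoint_ker le_rfl (hcompl n hn).symm.disjoint hmem (he n hn) ?_
      rw [← Module.End.mul_apply, ← pow_succ, hTe _ (by omega), hTe n hn]
  · simpa [Nat.one_le_iff_ne_zero.1 hn] using he n hn

lemma mul_norm_le_norm_apply_of_mem_lowerBounds {𝕜 X Y : Type*} [RCLike 𝕜]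
    [NormedAddCommGroup X] [NormedSpace 𝕜 X] [NormedAddCommGroup Y] [NormedSpace 𝕜 Y]
    {A : X →L[𝕜] Y} {E : Submodule 𝕜 X} {c : ℝ}
    (hc : c ∈ lowerBounds {t | ∃ x ∈ E, ‖x‖ = 1 ∧ ‖A x‖ = t}) {e : X} (he : e ∈ E) :
    c * ‖e‖ ≤ ‖A e‖ := by
  rcases eq_or_ne e 0 with rfl | hne
  · simp
  have hunit := hc ⟨(‖e‖⁻¹ : 𝕜) • e, E.smul_mem _ he, norm_smul_inv_norm hne, rfl⟩
  rw [map_smul, norm_smul, norm_inv, RCLike.norm_ofReal, abs_norm] at hunit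
  rwa [← le_inv_mul_iff₀' (norm_pos_iff.2 hne)]

lemma exists_isBackwardOrbit_norm_le_div {𝕜 X : Type*} [RCLike 𝕜] [NormedAddCommGroup X]
    [NormedSpace 𝕜 X] {T : X →L[𝕜] X} (hT : Function.Surjective T) {E : ℕ → Submodule 𝕜 X}
    (hcompl : ∀ n, 1 ≤ n → IsCompl (LinearMap.ker ((T ^ n : X →L[𝕜] X) : X →ₗ[𝕜] X)) (E n))
    (hmap : ∀ n, 1 ≤ n → (E (n + 1)).map (T : X →ₗ[𝕜] X) = E n) {c : ℕ → ℝ}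
    (hc : ∀ n, 1 ≤ n → c n ∈ lowerBounds {t | ∃ x ∈ E n, ‖x‖ = 1 ∧ ‖(T ^ n) x‖ = t})
    (hcpos : ∀ n, 1 ≤ n → 0 < c n) (x : X) :
    ∃ s, IsBackwardOrbit T x s ∧ ∀ n, 1 ≤ n → ‖s n‖ ≤ ‖x‖ / c n := by
  obtain ⟨s, hs, hsE⟩ := exists_isBackwardOrbit_mem_of_isCompl (T := (T : X →ₗ[𝕜] X)) hT
    (fun n hn => by simpa using hcompl n hn) hmap x
  refine ⟨s, hs, fun n hn => ?_⟩
  have hx : (T ^ n) (s n) = x := by rw [pow_apply_of_apply_succ hs.2, hs.1]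
  rw [le_div_iff₀' (hcpos n hn), ← hx]
  exact mul_norm_le_norm_apply_of_mem_lowerBounds (hc n hn) (hsE n hn)

lemma exists_pos_lt_one_eventually_le_pow {a : ℕ → ℝ} (ha : ∀ n, 0 ≤ a (n + 1))
    (h : ∃ L < (1 : ℝ), Tendsto (fun n : ℕ => a (n + 1) ^ ((n : ℝ) + 1)⁻¹) atTop (nhds L)) :
    ∃ r, 0 < r ∧ r < 1 ∧ ∀ᶠ n in atTop, a n ≤ r ^ n := by
  obtain ⟨L, hL1, hL⟩ := h
  have hL0 : 0 ≤ L := ge_of_tendsto' hL fun n => Real.rpow_nonneg (ha n) _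
  obtain ⟨r, hLr, hr1⟩ := exists_between hL1
  refine ⟨r, hL0.trans_lt hLr, hr1, ?_⟩
  obtain ⟨N, hN⟩ := (hL.eventually (gt_mem_nhds hLr)).exists_forall_of_atTop
  refine eventually_atTop.2 ⟨N + 1, fun n hn => ?_⟩
  obtain ⟨n, rfl⟩ : ∃ k, n = k + 1 := ⟨n - 1, by omega⟩
  have := pow_le_pow_left₀ (Real.rpow_nonneg (ha n) _) (hN n (by omega)).le (n + 1)
  rwa [show ((n : ℝ) + 1) = ((n + 1 : ℕ) : ℝ) by push_cast; ring,
    Real.rpow_inv_natCast_pow (ha n) (by omega)] at this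

lemma exists_forall_norm_le_mul_pow {E : Type*} [NormedAddCommGroup E] {s : ℕ → E} {r c : ℝ}
    (hr : 0 < r) (h : ∀ᶠ n in atTop, ‖s n‖ ≤ c * r ^ n) : ∃ K, ∀ n, ‖s n‖ ≤ K * r ^ n := by
  have hO : s =O[atTop] fun n => r ^ n :=
    Asymptotics.IsBigO.of_bound c (h.mono fun n hn => by rwa [Real.norm_of_nonneg (by positivity)])
  obtain ⟨K, hK⟩ :=
    (Asymptotics.isBigO_nat_atTop_iff fun n hn => absurd hn (pow_ne_zero n hr.ne')).1 hO
  exact ⟨K, fun n => by simpa [abs_of_pos hr] using hK n⟩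

theorem stmt7_general (X : Type*) [NormedAddCommGroup X] [NormedSpace ℝ X] [CompleteSpace X]
    [TopologicalSpace.SeparableSpace X]
    (T : X →L[ℝ] X) (hsurj : Function.Surjective T)
    (E : ℕ → Submodule ℝ X)
    (hcompl : ∀ n, 1 ≤ n → IsCompl (LinearMap.ker ((T ^ n : X →L[ℝ] X) : X →ₗ[ℝ] X)) (E n))
    (hmap : ∀ n, 1 ≤ n → (E (n + 1)).map (T : X →ₗ[ℝ] X) = E n)
    (hdense : Dense (⋃ n : ℕ, (LinearMap.ker ((T ^ n : X →L[ℝ] X) : X →ₗ[ℝ] X) : Set X)))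
    (pT : ℕ → ℝ)
    (hpT : ∀ n, 1 ≤ n → IsGLB {r : ℝ | ∃ x ∈ E n, ‖x‖ = 1 ∧ ‖(T ^ n) x‖ = r} (pT n))
    (hpos : ∀ n, 1 ≤ n → 0 < pT n)
    (hlim : ∃ L < (1 : ℝ), Filter.Tendsto
      (fun n : ℕ => (pT (n + 1))⁻¹ ^ (((n : ℝ) + 1)⁻¹)) Filter.atTop (nhds L)) :
    (∀ x ∈ ⋃ n : ℕ, (LinearMap.ker ((T ^ n : X →L[ℝ] X) : X →ₗ[ℝ] X) : Set X),
      ∃ s : ℕ → X, s 0 = x ∧ (∀ n : ℕ, T (s (n + 1)) = s n) ∧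
        (∀ n : ℕ, 1 ≤ n → ‖s n‖ ≤ ‖x‖ / pT n) ∧
        Summable (fun n : ℕ => (T ^ n) x) ∧ Summable s) ∧
      FrequentlyHypercyclic (fun y : X => T y) ∧ DevaneyChaotic (fun y : X => T y) := by
  obtain ⟨r, hr0, hr1, hr⟩ := exists_pos_lt_one_eventually_le_pow (a := fun n => (pT n)⁻¹)
    (fun n => inv_nonneg.2 (hpos _ (by omega)).le) hlim
  have hright :=
    exists_isBackwardOrbit_norm_le_div hsurj hcompl hmap (fun n hn => (hpT n hn).1) hpos
  have hgeom : ∀ (x : X) (s : ℕ → X), (∀ n, 1 ≤ n → ‖s n‖ ≤ ‖x‖ / pT n) →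
      ∀ᶠ n in atTop, ‖s n‖ ≤ ‖x‖ * r ^ n := by
    intro x s hs
    filter_upwards [hr, eventually_ge_atTop 1] with n hn hn1
    exact (hs n hn1).trans (by rw [div_eq_mul_inv]; gcongr)
  refine ⟨fun x hx => ?_, frequentlyHypercyclic_and_devaneyChaotic_of_dense_backward_orbits T
    hr0.le hr1 hdense (fun x hx => ?_) (fun x _ => ?_)⟩
  · obtain ⟨m, hm⟩ := Set.mem_iUnion.1 hx
    obtain ⟨s, hs, hsn⟩ := hright x
    refine ⟨s, hs.1, hs.2, hsn, summable_of_ne_finset_zero (s := range m) fun n hn =>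
      pow_apply_eq_zero_of_le hm (by simpa using hn), .of_norm_bounded_eventually_nat
      ((summable_geometric_of_lt_one hr0.le hr1).mul_left ‖x‖) (hgeom x s hsn)⟩
  · obtain ⟨m, hm⟩ := Set.mem_iUnion.1 hx
    exact ⟨m, hm⟩
  · obtain ⟨s, hs, hsn⟩ := hright x
    exact ⟨s, hs, exists_forall_norm_le_mul_pow hr0 (hgeom x s hsn)⟩

theorem stmt7 (X : Type*) [NormedAddCommGroup X] [NormedSpace ℝ X] [CompleteSpace X]
    [TopologicalSpace.SeparableSpace X]
    (T : X →L[ℝ] X) (hsurj : Function.Surjective T) (hninj : ¬ Function.Injective T)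
    (E : ℕ → Submodule ℝ X)
    (hclosed : ∀ n, 1 ≤ n → IsClosed (E n : Set X))
    (hcompl : ∀ n, 1 ≤ n → IsCompl (LinearMap.ker ((T ^ n : X →L[ℝ] X) : X →ₗ[ℝ] X)) (E n))
    (hmap : ∀ n, 1 ≤ n → (E (n + 1)).map (T : X →ₗ[ℝ] X) = E n)
    (hdense : Dense (⋃ n : ℕ, (LinearMap.ker ((T ^ n : X →L[ℝ] X) : X →ₗ[ℝ] X) : Set X)))
    (pT : ℕ → ℝ)
    (hpT : ∀ n, 1 ≤ n → IsGLB {r : ℝ | ∃ x ∈ E n, ‖x‖ = 1 ∧ ‖(T ^ n) x‖ = r} (pT n))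
    (hpos : ∀ n, 1 ≤ n → 0 < pT n)
    (hlim : ∃ L < (1 : ℝ), Filter.Tendsto
      (fun n : ℕ => (pT (n + 1))⁻¹ ^ (((n : ℝ) + 1)⁻¹)) Filter.atTop (nhds L)) :
    (∀ x ∈ ⋃ n : ℕ, (LinearMap.ker ((T ^ n : X →L[ℝ] X) : X →ₗ[ℝ] X) : Set X),
      ∃ s : ℕ → X, s 0 = x ∧ (∀ n : ℕ, T (s (n + 1)) = s n) ∧
        (∀ n : ℕ, 1 ≤ n → ‖s n‖ ≤ ‖x‖ / pT n) ∧
        Summable (fun n : ℕ => (T ^ n) x) ∧ Summable s) ∧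
      FrequentlyHypercyclic (fun y : X => T y) ∧ DevaneyChaotic (fun y : X => T y) :=
  stmt7_general X T hsurj E hcompl hmap hdense pT hpT hpos hlim
end

section
/- Let $m$ be a Borel probability measure on $\mathbb{R}$ with exponential tails: $m(\{x : |x| > z\}) \leq C\gamma^z$ for some $C > 0$, $0 < \gamma < 1$, and all $z > 0$. Let $(d_n)$ be positive reals such that $((\log n)/d_n)_{n\geq 2} \in \ell^p(\mathbb{R})$. Then for every $\epsilon > 0$ there exists $(\kappa_n) \in \ell^p(\mathbb{R})$ of positive numbers with $\sum_{n=1}^\infty m(\{x : |x| > d_n\kappa_n\}) < \epsilon$. -/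
open MeasureTheory Filter Topology

/-!
Take `κ n = B * log (n + 2) / d n`, which lies in `ℓ^p` with `log (n + 2) / d n`. The tail bound
turns `m {|x| > B log (n + 2)}` into `C (n + 2) ^ (B log γ)`, and since `log γ < 0` the series
`∑ (n + 2) ^ (B log γ)` tends to `0` as `B → ∞` (dominated convergence), so a large `B` works.
-/

lemma Real.rpow_mul_log_comm {a b : ℝ} (ha : 0 < a) (hb : 0 < b) (t : ℝ) :
    a ^ (t * Real.log b) = b ^ (t * Real.log a) := by
  rw [Real.rpow_def_of_pos ha, Real.rpow_def_of_pos hb]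
  ring_nf

lemma summable_nat_add_two_rpow_neg {s : ℝ} (hs : 1 < s) :
    Summable fun n : ℕ => ((n : ℝ) + 2) ^ (-s) := by
  have := (summable_nat_add_iff 2).2 (Real.summable_nat_rpow.2 (neg_lt_neg hs))
  exact_mod_cast this

lemma tendsto_tsum_nat_add_two_rpow_neg_atTop :
    Tendsto (fun s : ℝ => ∑' n : ℕ, ((n : ℝ) + 2) ^ (-s)) atTop (𝓝 0) := by
  have hbase (n : ℕ) : (1 : ℝ) < (n : ℝ) + 2 := by linarith [n.cast_nonneg (α := ℝ)]
  have hpoint (n : ℕ) : Tendsto (fun s : ℝ => ((n : ℝ) + 2) ^ (-s)) atTop (𝓝 0) := by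
    have hpos : (0 : ℝ) < (n : ℝ) + 2 := by linarith [hbase n]
    simpa [Real.rpow_neg hpos.le, Real.inv_rpow hpos.le] using
      tendsto_rpow_atTop_of_base_lt_one _ (by linarith [inv_pos.2 hpos])
        (inv_lt_one_of_one_lt₀ (hbase n))
  have hdom : ∀ᶠ s : ℝ in atTop, ∀ n : ℕ, ‖((n : ℝ) + 2) ^ (-s)‖ ≤ ((n : ℝ) + 2) ^ (-2 : ℝ) := by
    filter_upwards [eventually_ge_atTop 2] with s hs n
    rw [Real.norm_of_nonneg (by positivity)]
    exact Real.rpow_le_rpow_of_exponent_le (hbase n).le (neg_le_neg hs)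
  simpa using tendsto_tsum_of_dominated_convergence
    (summable_nat_add_two_rpow_neg one_lt_two) hpoint hdom

lemma exists_pos_tsum_const_mul_rpow_mul_log_lt {γ : ℝ} (hγ0 : 0 < γ) (hγ1 : γ < 1) (C : ℝ)
    {ε : ℝ} (hε : 0 < ε) :
    ∃ B > 0, Summable (fun n : ℕ => C * ((n : ℝ) + 2) ^ (B * Real.log γ)) ∧
      ∑' n : ℕ, C * ((n : ℝ) + 2) ^ (B * Real.log γ) < ε := by
  have hexp : Tendsto (fun B => B * -Real.log γ) atTop atTop :=
    tendsto_id.atTop_mul_const (neg_pos.2 (Real.log_neg hγ0 hγ1))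
  have hsum := (tendsto_tsum_nat_add_two_rpow_neg_atTop.comp hexp).const_mul C
  rw [mul_zero] at hsum
  obtain ⟨B, hB, hs, hlt⟩ := ((eventually_gt_atTop 0).and
    ((hexp.eventually_gt_atTop 1).and (hsum.eventually (gt_mem_nhds hε)))).exists
  simp only [Function.comp_apply, mul_neg, neg_neg] at hs hlt
  refine ⟨B, hB, ((summable_nat_add_two_rpow_neg hs).mul_left C).congr fun n => ?_, ?_⟩
  · simp
  · simpa [mul_neg, tsum_mul_left] using hlt

lemma measure_log_lt_abs_le_of_exponential_tail (m : Measure ℝ) {C γ : ℝ} (hγ0 : 0 < γ)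
    (htail : ∀ z : ℝ, 0 < z → m {x : ℝ | z < |x|} ≤ ENNReal.ofReal (C * γ ^ z))
    {B y : ℝ} (hB : 0 < B) (hy : 1 < y) :
    m {x : ℝ | B * Real.log y < |x|} ≤ ENNReal.ofReal (C * y ^ (B * Real.log γ)) := by
  rw [← Real.rpow_mul_log_comm hγ0 (by linarith)]
  exact htail _ (mul_pos hB (Real.log_pos hy))

theorem stmt13_general (m : Measure ℝ)
    (C γ : ℝ) (hC : 0 < C) (hγ0 : 0 < γ) (hγ1 : γ < 1)
    (htail : ∀ z : ℝ, 0 < z → m {x : ℝ | z < |x|} ≤ ENNReal.ofReal (C * γ ^ z))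
    (p : ℝ)
    (d : ℕ → ℝ) (hd : ∀ n, 0 < d n)
    (hlog : Memℓp (fun n : ℕ => Real.log ((n : ℝ) + 2) / d n) (ENNReal.ofReal p)) :
    ∀ ε : ℝ, 0 < ε → ∃ κ : ℕ → ℝ,
      (∀ n, 0 < κ n) ∧ Memℓp κ (ENNReal.ofReal p) ∧
      (∑' n : ℕ, m {x : ℝ | d n * κ n < |x|}) < ENNReal.ofReal ε := by
  intro ε hε
  have hn2 (n : ℕ) : (1 : ℝ) < (n : ℝ) + 2 := by linarith [n.cast_nonneg (α := ℝ)]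
  obtain ⟨B, hB, hsum, hlt⟩ := exists_pos_tsum_const_mul_rpow_mul_log_lt hγ0 hγ1 C hε
  refine ⟨fun n => B * (Real.log ((n : ℝ) + 2) / d n),
    fun n => mul_pos hB (div_pos (Real.log_pos (hn2 n)) (hd n)), hlog.const_mul B, ?_⟩
  calc ∑' n : ℕ, m {x : ℝ | d n * (B * (Real.log ((n : ℝ) + 2) / d n)) < |x|}
      ≤ ∑' n : ℕ, ENNReal.ofReal (C * ((n : ℝ) + 2) ^ (B * Real.log γ)) :=
        ENNReal.tsum_le_tsum fun n => by
          have hcancel :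
              d n * (B * (Real.log ((n : ℝ) + 2) / d n)) = B * Real.log ((n : ℝ) + 2) := by
            field_simp [(hd n).ne']
          rw [hcancel]
          exact measure_log_lt_abs_le_of_exponential_tail m hγ0 htail hB (hn2 n)
    _ = ENNReal.ofReal (∑' n : ℕ, C * ((n : ℝ) + 2) ^ (B * Real.log γ)) :=
        (ENNReal.ofReal_tsum_of_nonneg (fun n => by positivity) hsum).symm
    _ < ENNReal.ofReal ε := (ENNReal.ofReal_lt_ofReal_iff hε).2 hlt

theorem stmt13 (m : Measure ℝ) [IsProbabilityMeasure m]
    (C γ : ℝ) (hC : 0 < C) (hγ0 : 0 < γ) (hγ1 : γ < 1)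
    (htail : ∀ z : ℝ, 0 < z → m {x : ℝ | z < |x|} ≤ ENNReal.ofReal (C * γ ^ z))
    (p : ℝ) (hp : 1 ≤ p)
    (d : ℕ → ℝ) (hd : ∀ n, 0 < d n)
    (hlog : Memℓp (fun n : ℕ => Real.log ((n : ℝ) + 2) / d n) (ENNReal.ofReal p)) :
    ∀ ε : ℝ, 0 < ε → ∃ κ : ℕ → ℝ,
      (∀ n, 0 < κ n) ∧ Memℓp κ (ENNReal.ofReal p) ∧
      (∑' n : ℕ, m {x : ℝ | d n * κ n < |x|}) < ENNReal.ofReal ε :=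
  stmt13_general m C γ hC hγ0 hγ1 htail p d hd hlog
end

section
/- Let $X = \ell^p(\mathbb{R})$, let $L$ be a weighted shift with weights $\alpha_n \in (c,c')$ satisfying $d := \sum_{n\geq 1}(d_n)^{-\alpha} < \infty$ where $d_n = \inf_k \beta_k^n$, and let $A$ be bounded and $\alpha$-Hölder. For $s \in (0,1)$ define $\mathcal{T}_{s,A}(u)(x) = \log\int_{\mathbb{R}} e^{A(r, x_1/\alpha_1, x_2/\alpha_2,\dots) + s\,u(r, x_1/\alpha_1,\dots)}\,dm(r)$ on bounded continuous functions, where $m$ is a Borel probability measure on $\mathbb{R}$. Then $\mathcal{T}_{s,A}$ maps $\mathcal{C}_b(X)$ to itself and satisfies $\|\mathcal{T}_{s,A}(u_1) - \mathcal{T}_{s,A}(u_2)\|_\infty \leq s\|u_1 - u_2\|_\infty$; hence it has a unique fixed point $u_s \in \mathcal{C}_b(X)$. -/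
/-!
`T_{s,A}` is the composition of the affine map `u ↦ A + s • u`, which is `s`-Lipschitz for the
sup norm, with `φ ↦ (x ↦ log ∫ exp φ(ι r x) dm(r))`, which is `1`-Lipschitz: if `φ ≤ ψ + C`
pointwise then `∫ exp φ ≤ e^C ∫ exp ψ`, and the logarithm turns the factor `e^C` into `+ C`.
Continuity in `x` is dominated convergence, the integrand being bounded by `exp ‖φ‖`.
For `s < 1` Banach's fixed point theorem applies in the complete space `C_b(X)`.
-/

open MeasureTheory BoundedContinuousFunction

section LogIntegralExp

variable {Ω : Type*} [TopologicalSpace Ω]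

theorem exp_le_exp_norm (f : Ω →ᵇ ℝ) (r : Ω) : ‖Real.exp (f r)‖ ≤ Real.exp ‖f‖ := by
  rw [Real.norm_of_nonneg (Real.exp_pos _).le]
  exact Real.exp_le_exp.2 (f.apply_le_norm r)

variable [MeasurableSpace Ω] [OpensMeasurableSpace Ω] {m : Measure Ω}

theorem integrable_exp [IsFiniteMeasure m] (f : Ω →ᵇ ℝ) :
    Integrable (fun r => Real.exp (f r)) m :=
  (integrable_const (Real.exp ‖f‖)).mono' f.continuous.rexp.aestronglyMeasurable
    (ae_of_all _ (exp_le_exp_norm f))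

variable [IsProbabilityMeasure m]

theorem log_integral_exp_le_add_norm_sub (f g : Ω →ᵇ ℝ) :
    Real.log (∫ r, Real.exp (f r) ∂m) ≤ Real.log (∫ r, Real.exp (g r) ∂m) + ‖f - g‖ := by
  have hf := integral_exp_pos (μ := m) (integrable_exp f)
  have hg := integral_exp_pos (μ := m) (integrable_exp g)
  have hfg : ∫ r, Real.exp (f r) ∂m ≤ Real.exp ‖f - g‖ * ∫ r, Real.exp (g r) ∂m := by
    rw [← integral_const_mul]
    refine integral_mono (integrable_exp f) ((integrable_exp g).const_mul _) fun r => ?_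
    have hr := (f - g).apply_le_norm r
    rw [coe_sub, Pi.sub_apply] at hr
    rw [← Real.exp_add, Real.exp_le_exp]
    linarith
  calc Real.log (∫ r, Real.exp (f r) ∂m)
      ≤ Real.log (Real.exp ‖f - g‖ * ∫ r, Real.exp (g r) ∂m) := Real.log_le_log hf hfg
    _ = Real.log (∫ r, Real.exp (g r) ∂m) + ‖f - g‖ := by
      rw [Real.log_mul (Real.exp_pos _).ne' hg.ne', Real.log_exp, add_comm]

theorem abs_log_integral_exp_sub_le (f g : Ω →ᵇ ℝ) :
    |Real.log (∫ r, Real.exp (f r) ∂m) - Real.log (∫ r, Real.exp (g r) ∂m)| ≤ ‖f - g‖ := by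
  rw [abs_sub_le_iff]
  constructor <;>
    linarith [log_integral_exp_le_add_norm_sub (m := m) f g,
      log_integral_exp_le_add_norm_sub (m := m) g f, norm_sub_rev f g]

theorem abs_log_integral_exp_le (f : Ω →ᵇ ℝ) :
    |Real.log (∫ r, Real.exp (f r) ∂m)| ≤ ‖f‖ := by
  simpa using abs_log_integral_exp_sub_le (m := m) f 0

end LogIntegralExp

section LogTransfer

variable {Ω X Y : Type*} [TopologicalSpace Ω] [MeasurableSpace Ω] [OpensMeasurableSpace Ω]
  [TopologicalSpace X] [TopologicalSpace Y] {ι : Ω → Y → X}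

def fiberMap (hι : Continuous fun q : Ω × Y => ι q.1 q.2) (y : Y) : C(Ω, X) :=
  ⟨fun r => ι r y, hι.comp (Continuous.prodMk_left y)⟩

theorem continuous_integral_exp_comp [FirstCountableTopology Y]
    (hι : Continuous fun q : Ω × Y => ι q.1 q.2) (m : Measure Ω) [IsFiniteMeasure m]
    (φ : X →ᵇ ℝ) : Continuous fun y => ∫ r, Real.exp (φ (ι r y)) ∂m :=
  continuous_of_dominated
    (fun y => (integrable_exp (m := m) (φ.compContinuous (fiberMap hι y))).aestronglyMeasurable)
    (fun y => ae_of_all _ fun r => exp_le_exp_norm φ (ι r y)) (integrable_const _)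
    (ae_of_all _ fun r => (φ.continuous.comp (hι.comp (Continuous.prodMk_right r))).rexp)

noncomputable def logTransfer [FirstCountableTopology Y]
    (hι : Continuous fun q : Ω × Y => ι q.1 q.2) (m : Measure Ω) [IsProbabilityMeasure m]
    (φ : X →ᵇ ℝ) : Y →ᵇ ℝ :=
  ofNormedAddCommGroup (fun y => Real.log (∫ r, Real.exp (φ (ι r y)) ∂m))
    ((continuous_integral_exp_comp hι m φ).log fun y =>
      (integral_exp_pos (integrable_exp (φ.compContinuous (fiberMap hι y)))).ne')
    ‖φ‖
    (fun y => (abs_log_integral_exp_le (φ.compContinuous (fiberMap hι y))).trans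
      (norm_compContinuous_le φ _))

variable [FirstCountableTopology Y] (hι : Continuous fun q : Ω × Y => ι q.1 q.2)
  (m : Measure Ω) [IsProbabilityMeasure m]

theorem logTransfer_apply (φ : X →ᵇ ℝ) (y : Y) :
    logTransfer hι m φ y = Real.log (∫ r, Real.exp (φ (ι r y)) ∂m) :=
  rfl

theorem norm_logTransfer_sub_le (φ ψ : X →ᵇ ℝ) :
    ‖logTransfer hι m φ - logTransfer hι m ψ‖ ≤ ‖φ - ψ‖ := by
  refine (norm_le (norm_nonneg _)).2 fun y => ?_
  calc ‖(logTransfer hι m φ - logTransfer hι m ψ) y‖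
      ≤ ‖φ.compContinuous (fiberMap hι y) - ψ.compContinuous (fiberMap hι y)‖ :=
        abs_log_integral_exp_sub_le (m := m) (φ.compContinuous (fiberMap hι y))
          (ψ.compContinuous (fiberMap hι y))
    _ = ‖(φ - ψ).compContinuous (fiberMap hι y)‖ := rfl
    _ ≤ ‖φ - ψ‖ := norm_compContinuous_le _ _

end LogTransfer

theorem stmt14_general (p : ENNReal) [Fact (1 ≤ p)]
    (m : Measure ℝ) [IsProbabilityMeasure m]
    (A : lp (fun _ : ℕ => ℝ) p →ᵇ ℝ)
    -- `ι r x` is the preimage `(r, x₁/α₁, x₂/α₂, …)` of `x` under the weighted shift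
    (ι : ℝ → lp (fun _ : ℕ => ℝ) p → lp (fun _ : ℕ => ℝ) p)
    (hιcont : Continuous fun q : ℝ × lp (fun _ : ℕ => ℝ) p => ι q.1 q.2)
    (s : ℝ) (hs0 : 0 < s) (hs1 : s < 1) :
    ∃ T : (lp (fun _ : ℕ => ℝ) p →ᵇ ℝ) → (lp (fun _ : ℕ => ℝ) p →ᵇ ℝ),
      (∀ (u : lp (fun _ : ℕ => ℝ) p →ᵇ ℝ) (x : lp (fun _ : ℕ => ℝ) p),
        T u x = Real.log (∫ r : ℝ, Real.exp (A (ι r x) + s * u (ι r x)) ∂m)) ∧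
      (∀ u₁ u₂ : lp (fun _ : ℕ => ℝ) p →ᵇ ℝ, ‖T u₁ - T u₂‖ ≤ s * ‖u₁ - u₂‖) ∧
      (∃! u : lp (fun _ : ℕ => ℝ) p →ᵇ ℝ, T u = u) := by
  let T := fun u : lp (fun _ : ℕ => ℝ) p →ᵇ ℝ => logTransfer hιcont m (A + s • u)
  have hT : ∀ u₁ u₂, ‖T u₁ - T u₂‖ ≤ s * ‖u₁ - u₂‖ := fun u₁ u₂ =>
    calc ‖T u₁ - T u₂‖ ≤ ‖(A + s • u₁) - (A + s • u₂)‖ := norm_logTransfer_sub_le hιcont m _ _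
      _ = s * ‖u₁ - u₂‖ := by
        rw [add_sub_add_left_eq_sub, ← smul_sub s u₁ u₂, norm_smul, Real.norm_of_nonneg hs0.le]
  have hTc : ContractingWith ⟨s, hs0.le⟩ T :=
    ⟨by exact_mod_cast hs1, LipschitzWith.of_dist_le_mul fun u₁ u₂ => by
      rw [dist_eq_norm, dist_eq_norm]; exact hT u₁ u₂⟩
  exact ⟨T, fun u x => by simp [T, logTransfer_apply], hT,
    hTc.fixedPoint T, hTc.fixedPoint_isFixedPt, fun u hu => hTc.fixedPoint_unique hu⟩

theorem stmt14 (p : ENNReal) [Fact (1 ≤ p)] (hp : p ≠ ⊤)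
    (c c' : ℝ) (hc : 0 < c) (hcc : c < c')
    (α : ℕ → ℝ) (hα : ∀ n, α n ∈ Set.Ioo c c')
    (a : ℝ) (ha0 : 0 < a) (ha1 : a ≤ 1)
    (hd : Summable fun n => (dseq α (n + 1))⁻¹ ^ a)
    (m : Measure ℝ) [IsProbabilityMeasure m]
    (A : lp (fun _ : ℕ => ℝ) p →ᵇ ℝ) (K : ℝ)
    (hA : ∀ x y : lp (fun _ : ℕ => ℝ) p, |A x - A y| ≤ K * ‖x - y‖ ^ a)
    -- `ι r x` is the preimage `(r, x₁/α₁, x₂/α₂, …)` of `x` under the weighted shift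
    (ι : ℝ → lp (fun _ : ℕ => ℝ) p → lp (fun _ : ℕ => ℝ) p)
    (hι : ∀ (r : ℝ) (x : lp (fun _ : ℕ => ℝ) p) (n : ℕ),
      (ι r x : ∀ _ : ℕ, ℝ) n = if n = 0 then r else (x : ∀ _ : ℕ, ℝ) (n - 1) / α (n - 1))
    (hιcont : Continuous fun q : ℝ × lp (fun _ : ℕ => ℝ) p => ι q.1 q.2)
    (s : ℝ) (hs0 : 0 < s) (hs1 : s < 1) :
    ∃ T : (lp (fun _ : ℕ => ℝ) p →ᵇ ℝ) → (lp (fun _ : ℕ => ℝ) p →ᵇ ℝ),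
      (∀ (u : lp (fun _ : ℕ => ℝ) p →ᵇ ℝ) (x : lp (fun _ : ℕ => ℝ) p),
        T u x = Real.log (∫ r : ℝ, Real.exp (A (ι r x) + s * u (ι r x)) ∂m)) ∧
      (∀ u₁ u₂ : lp (fun _ : ℕ => ℝ) p →ᵇ ℝ, ‖T u₁ - T u₂‖ ≤ s * ‖u₁ - u₂‖) ∧
      (∃! u : lp (fun _ : ℕ => ℝ) p →ᵇ ℝ, T u = u) :=
  stmt14_general p m A ι hιcont s hs0 hs1
end

section
/- With the assumptions of the discounted operator setting (weighted shift $L$ on $X$ with $d = \sum_n (d_n)^{-\alpha} < \infty$, $A$ bounded $\alpha$-Hölder with Hölder constant $\mathrm{Lip}_{A,D_X^\alpha}$), the fixed points $u_s$ of $\mathcal{T}_{s,A}$ satisfy for all $s \in (0,1)$ and all $x, y \in X$: $|u_s(x) - u_s(y)| \leq d\,\mathrm{Lip}_{A,D_X^\alpha}\|x-y\|_X^\alpha$. Hence the family $(u_s)_{0<s<1}$ is equicontinuous. -/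
/-!
Write `S = ι 0`. The lifts satisfy `ι r x - ι r y = S (x - y)` for every `r`, and `log ∫ exp` is
1-Lipschitz for the sup norm, so the fixed-point equation bounds `|u x - u y|` by
`K ‖S (x - y)‖ ^ a + s · sup { |u x' - u y'| : x' - y' = S (x - y) }`. Iterating `N` times and
bounding the remainder by `s ^ N · 2 ‖u‖` gives `|u x - u y| ≤ K ∑ₙ sⁿ ‖Sⁿ⁺¹ (x - y)‖ ^ a`.
Finally `Sⁿ` moves coordinate `k` to `k + n` and divides it by `β_kⁿ ≥ dₙ`, so
`‖Sⁿ v‖ ≤ ‖v‖ / dₙ`. The resulting Hölder bound does not depend on `s`.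
-/

open MeasureTheory BoundedContinuousFunction

open Function Finset Filter Topology

theorem lp.norm_le_mul_norm_of_injective {I J E : Type*} [NormedAddCommGroup E]
    {p : ENNReal} [Fact (1 ≤ p)] {e : I → J} (he : Injective e)
    {w : lp (fun _ : J => E) p} {z : lp (fun _ : I => E) p} {M : ℝ} (hM : 0 ≤ M)
    (hw : ∀ j ∉ Set.range e, w j = 0) (hwz : ∀ i, ‖w (e i)‖ ≤ M * ‖z i‖) :
    ‖w‖ ≤ M * ‖z‖ := by
  have hp0 : p ≠ 0 := (zero_lt_one.trans_le Fact.out).ne'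
  obtain rfl | rfl | hp := p.trichotomy
  · exact (hp0 rfl).elim
  · refine lp.norm_le_of_forall_le (by positivity) fun j => ?_
    by_cases hj : j ∈ Set.range e
    · obtain ⟨i, rfl⟩ := hj
      exact (hwz i).trans (by gcongr; exact lp.norm_apply_le_norm hp0 z i)
    · simpa [hw j hj] using mul_nonneg hM (norm_nonneg z)
  · refine lp.norm_le_of_forall_sum_le hp (by positivity) fun s => ?_
    classical
    calc ∑ j ∈ s, ‖w j‖ ^ p.toReal
        = ∑ i ∈ s.preimage e he.injOn, ‖w (e i)‖ ^ p.toReal :=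
          (sum_preimage e s he.injOn _ fun j _ hj => by simp [hw j hj, hp.ne']).symm
      _ ≤ ∑ i ∈ s.preimage e he.injOn, M ^ p.toReal * ‖z i‖ ^ p.toReal := by
          gcongr with i
          rw [← Real.mul_rpow hM (norm_nonneg _)]
          gcongr
          exact hwz i
      _ ≤ M ^ p.toReal * ‖z‖ ^ p.toReal := by
          rw [← mul_sum]
          gcongr
          exact lp.sum_rpow_le_norm_rpow hp z _
      _ = (M * ‖z‖) ^ p.toReal := (Real.mul_rpow hM (norm_nonneg _)).symm

section WeightedShift

variable {c : ℝ} {α : ℕ → ℝ}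

theorem pow_le_beta (hc : 0 ≤ c) (hα : ∀ n, c ≤ α n) (k n : ℕ) : c ^ n ≤ beta α k n := by
  calc c ^ n = ∏ _j ∈ range n, c := by simp
    _ ≤ beta α k n := prod_le_prod (fun _ _ => hc) fun j _ => hα (k + j)

theorem dseq_le_beta (hc : 0 ≤ c) (hα : ∀ n, c ≤ α n) (k n : ℕ) : dseq α n ≤ beta α k n :=
  ciInf_le ⟨c ^ n, Set.forall_mem_range.2 fun k => pow_le_beta hc hα k n⟩ k

theorem dseq_pos (hc : 0 < c) (hα : ∀ n, c ≤ α n) (n : ℕ) : 0 < dseq α n :=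
  (pow_pos hc n).trans_le (le_ciInf fun k => pow_le_beta hc.le hα k n)

theorem beta_succ (k n : ℕ) : beta α k (n + 1) = beta α k n * α (k + n) :=
  prod_range_succ _ _

variable {p : ENNReal}

/-- `ι r x = (r, x₀ / α₀, x₁ / α₁, …)` is the point `v` with `L v = x` and `v₀ = r`. -/
def IsWeightedShiftLift (α : ℕ → ℝ)
    (ι : ℝ → lp (fun _ : ℕ => ℝ) p → lp (fun _ : ℕ => ℝ) p) : Prop :=
  ∀ (r : ℝ) (x : lp (fun _ : ℕ => ℝ) p) (n : ℕ),
    (ι r x : ∀ _ : ℕ, ℝ) n = if n = 0 then r else (x : ∀ _ : ℕ, ℝ) (n - 1) / α (n - 1)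

namespace IsWeightedShiftLift

variable {ι : ℝ → lp (fun _ : ℕ => ℝ) p → lp (fun _ : ℕ => ℝ) p}

theorem sub_eq (hι : IsWeightedShiftLift α ι) (r : ℝ) (x y : lp (fun _ : ℕ => ℝ) p) :
    ι r x - ι r y = ι 0 (x - y) := by
  ext (_ | k) <;> simp [hι _ _ _, sub_div]

theorem iterate_apply_of_lt (hι : IsWeightedShiftLift α ι) (z : lp (fun _ : ℕ => ℝ) p)
    {k n : ℕ} (hk : k < n) :
    ((ι 0)^[n] z : ∀ _ : ℕ, ℝ) k = 0 := by
  induction n generalizing k with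
  | zero => exact (Nat.not_lt_zero k hk).elim
  | succ n ih =>
    rw [iterate_succ_apply', hι]
    rcases k with _ | k
    · rfl
    · simp [ih (Nat.lt_of_succ_lt_succ hk)]

theorem iterate_apply_add (hι : IsWeightedShiftLift α ι) (z : lp (fun _ : ℕ => ℝ) p)
    (k n : ℕ) :
    ((ι 0)^[n] z : ∀ _ : ℕ, ℝ) (k + n) = (z : ∀ _ : ℕ, ℝ) k / beta α k n := by
  induction n with
  | zero => simp [beta]
  | succ n ih => rw [iterate_succ_apply', hι, ← add_assoc]; simp [ih, beta_succ, div_div]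

theorem norm_iterate_le [Fact (1 ≤ p)] (hι : IsWeightedShiftLift α ι) (hc : 0 < c)
    (hα : ∀ n, c ≤ α n) (n : ℕ) (z : lp (fun _ : ℕ => ℝ) p) :
    ‖(ι 0)^[n] z‖ ≤ (dseq α n)⁻¹ * ‖z‖ := by
  have hd := dseq_pos hc hα n
  refine lp.norm_le_mul_norm_of_injective (add_left_injective n) (inv_nonneg.2 hd.le)
    (fun j hj => hι.iterate_apply_of_lt z (not_le.1 fun h => hj ⟨j - n, Nat.sub_add_cancel h⟩))
    fun k => ?_
  have hβ := dseq_le_beta hc.le hα k n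
  rw [hι.iterate_apply_add, norm_div, div_eq_inv_mul, Real.norm_of_nonneg (hd.le.trans hβ)]
  exact mul_le_mul_of_nonneg_right (inv_anti₀ hd hβ) (norm_nonneg _)

end IsWeightedShiftLift

end WeightedShift

section LogIntegralExp

variable {Ω : Type*} [MeasurableSpace Ω] {m : Measure Ω} {f g : Ω → ℝ} {a b B : ℝ}

theorem le_add_of_exp_eq_integral_exp (hf : Real.exp a = ∫ ω, Real.exp (f ω) ∂m)
    (hg : Real.exp b = ∫ ω, Real.exp (g ω) ∂m) (hfg : ∀ ω, f ω ≤ g ω + B) : a ≤ b + B := by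
  have hgi : Integrable (fun ω => Real.exp (g ω)) m :=
    .of_integral_ne_zero (hg ▸ (Real.exp_pos b).ne')
  rw [← Real.exp_le_exp, hf, Real.exp_add, hg, ← integral_mul_const]
  refine integral_mono (.of_integral_ne_zero (hf ▸ (Real.exp_pos a).ne')) (hgi.mul_const _)
    fun ω => ?_
  simpa only [← Real.exp_add] using Real.exp_le_exp.2 (hfg ω)

theorem abs_sub_le_of_exp_eq_integral_exp (hf : Real.exp a = ∫ ω, Real.exp (f ω) ∂m)
    (hg : Real.exp b = ∫ ω, Real.exp (g ω) ∂m) (hfg : ∀ ω, |f ω - g ω| ≤ B) : |a - b| ≤ B := by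
  rw [abs_sub_le_iff, sub_le_iff_le_add', sub_le_iff_le_add']
  exact ⟨le_add_of_exp_eq_integral_exp hf hg fun ω => by linarith [abs_sub_le_iff.1 (hfg ω)],
    le_add_of_exp_eq_integral_exp hg hf fun ω => by linarith [abs_sub_le_iff.1 (hfg ω)]⟩

end LogIntegralExp

section Iteration

variable {G : Type*} [AddGroup G] {u : G → ℝ} {T : G → G} {ω : G → ℝ} {s C : ℝ}

theorem abs_sub_le_geometric_sum (hC : ∀ x y, |u x - u y| ≤ C)
    (hstep : ∀ x y B, (∀ x' y', x' - y' = T (x - y) → |u x' - u y'| ≤ B) →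
      |u x - u y| ≤ ω (T (x - y)) + s * B)
    (N : ℕ) (x y : G) :
    |u x - u y| ≤ ∑ n ∈ range N, s ^ n * ω (T^[n + 1] (x - y)) + s ^ N * C := by
  induction N generalizing x y with
  | zero => simpa using hC x y
  | succ N ih =>
    refine (hstep x y _ fun x' y' h => h ▸ ih x' y').trans_eq ?_
    rw [sum_range_succ', mul_add, mul_sum, pow_succ']
    simp only [iterate_succ_apply, iterate_zero_apply, pow_succ', mul_assoc, pow_zero, one_mul,
      zero_add]
    ring

theorem abs_sub_le_tsum (hs0 : 0 ≤ s) (hs1 : s < 1) (hC : ∀ x y, |u x - u y| ≤ C)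
    (hstep : ∀ x y B, (∀ x' y', x' - y' = T (x - y) → |u x' - u y'| ≤ B) →
      |u x - u y| ≤ ω (T (x - y)) + s * B)
    {x y : G} {b : ℕ → ℝ} (hb0 : ∀ n, 0 ≤ b n) (hb : Summable b)
    (hωb : ∀ n, s ^ n * ω (T^[n + 1] (x - y)) ≤ b n) :
    |u x - u y| ≤ ∑' n, b n := by
  have hlim : Tendsto (fun N : ℕ => ∑' n, b n + s ^ N * C) atTop (𝓝 (∑' n, b n)) := by
    simpa using
      ((tendsto_pow_atTop_nhds_zero_of_lt_one hs0 hs1).mul_const C).const_add (∑' n, b n)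
  refine ge_of_tendsto' hlim fun N => (abs_sub_le_geometric_sum hC hstep N x y).trans ?_
  gcongr
  exact (sum_le_sum fun n _ => hωb n).trans (hb.sum_le_tsum _ fun n _ => hb0 n)

end Iteration

theorem equicontinuous_of_dist_le_mul_rpow {I X Y : Type*} [PseudoMetricSpace X]
    [PseudoMetricSpace Y] {f : I → X → Y} {L a : ℝ} (ha : 0 < a)
    (h : ∀ i x y, dist (f i x) (f i y) ≤ L * dist x y ^ a) : Equicontinuous f := by
  refine Metric.equicontinuous_of_continuity_modulus (fun t => L * |t| ^ a) ?_ f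
    fun x y i => by simpa only [abs_of_nonneg dist_nonneg] using h i x y
  simpa [ha.ne'] using ((continuous_abs.rpow_const fun _ => Or.inr ha.le).const_mul L).tendsto 0

theorem abs_sub_le_mul_rpow_of_fixedPoint {p : ENNReal} [Fact (1 ≤ p)] {c a K s : ℝ}
    {α : ℕ → ℝ} {ι : ℝ → lp (fun _ : ℕ => ℝ) p → lp (fun _ : ℕ => ℝ) p} {m : Measure ℝ}
    {A : lp (fun _ : ℕ => ℝ) p → ℝ} {u : lp (fun _ : ℕ => ℝ) p →ᵇ ℝ}
    (hc : 0 < c) (hα : ∀ n, c ≤ α n) (ha : 0 < a)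
    (hd : Summable fun n => (dseq α (n + 1))⁻¹ ^ a) (hK : 0 ≤ K)
    (hA : ∀ x y, |A x - A y| ≤ K * ‖x - y‖ ^ a) (hι : IsWeightedShiftLift α ι)
    (hs0 : 0 ≤ s) (hs1 : s < 1)
    (hfix : ∀ x, Real.exp (u x) = ∫ r, Real.exp (A (ι r x) + s * u (ι r x)) ∂m)
    (x y : lp (fun _ : ℕ => ℝ) p) :
    |u x - u y| ≤ (∑' n, (dseq α (n + 1))⁻¹ ^ a) * K * ‖x - y‖ ^ a := by
  rw [← tsum_mul_right, ← tsum_mul_right]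
  refine abs_sub_le_tsum (T := ι 0) (ω := fun v => K * ‖v‖ ^ a) hs0 hs1
    (fun x y => by simpa only [Real.dist_eq] using u.dist_le_two_norm x y) (fun x y B hB => ?_)
    (fun n => by have := dseq_pos hc hα (n + 1); positivity) ((hd.mul_right K).mul_right _)
    fun n => ?_
  · refine abs_sub_le_of_exp_eq_integral_exp (hfix x) (hfix y) fun r => ?_
    have hr := hι.sub_eq r x y
    calc |A (ι r x) + s * u (ι r x) - (A (ι r y) + s * u (ι r y))|
        ≤ |A (ι r x) - A (ι r y)| + s * |u (ι r x) - u (ι r y)| := by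
          rw [add_sub_add_comm, ← mul_sub]
          exact (abs_add_le _ _).trans_eq (by rw [abs_mul, abs_of_nonneg hs0])
      _ ≤ K * ‖ι 0 (x - y)‖ ^ a + s * B := by
          gcongr
          · exact hr ▸ hA _ _
          · exact hB _ _ hr
  · have hdn := dseq_pos hc hα (n + 1)
    calc s ^ n * (K * ‖(ι 0)^[n + 1] (x - y)‖ ^ a)
        ≤ 1 * (K * ((dseq α (n + 1))⁻¹ * ‖x - y‖) ^ a) := by
          gcongr
          · exact pow_le_one₀ hs0 hs1.le
          · exact hι.norm_iterate_le hc hα _ _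
      _ = (dseq α (n + 1))⁻¹ ^ a * K * ‖x - y‖ ^ a := by
          rw [one_mul, Real.mul_rpow (inv_nonneg.2 hdn.le) (norm_nonneg _)]
          ring

theorem stmt15_general (p : ENNReal) [Fact (1 ≤ p)]
    (c c' : ℝ) (hc : 0 < c)
    (α : ℕ → ℝ) (hα : ∀ n, α n ∈ Set.Ioo c c')
    (a : ℝ) (ha0 : 0 < a)
    (hd : Summable fun n => (dseq α (n + 1))⁻¹ ^ a)
    (m : Measure ℝ)
    (A : lp (fun _ : ℕ => ℝ) p →ᵇ ℝ) (K : ℝ) (hK : 0 ≤ K)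
    (hA : ∀ x y : lp (fun _ : ℕ => ℝ) p, |A x - A y| ≤ K * ‖x - y‖ ^ a)
    (ι : ℝ → lp (fun _ : ℕ => ℝ) p → lp (fun _ : ℕ => ℝ) p)
    (hι : ∀ (r : ℝ) (x : lp (fun _ : ℕ => ℝ) p) (n : ℕ),
      (ι r x : ∀ _ : ℕ, ℝ) n = if n = 0 then r else (x : ∀ _ : ℕ, ℝ) (n - 1) / α (n - 1))
    (u : Set.Ioo (0 : ℝ) 1 → (lp (fun _ : ℕ => ℝ) p →ᵇ ℝ))
    (hfix : ∀ (s : Set.Ioo (0 : ℝ) 1) (x : lp (fun _ : ℕ => ℝ) p),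
      Real.exp (u s x) =
        ∫ r : ℝ, Real.exp (A (ι r x) + (s : ℝ) * u s (ι r x)) ∂m) :
    (∀ (s : Set.Ioo (0 : ℝ) 1) (x y : lp (fun _ : ℕ => ℝ) p),
      |u s x - u s y| ≤ (∑' n, (dseq α (n + 1))⁻¹ ^ a) * K * ‖x - y‖ ^ a) ∧
    Equicontinuous (fun s : Set.Ioo (0 : ℝ) 1 => (u s : lp (fun _ : ℕ => ℝ) p → ℝ)) := by
  have holder : ∀ (s : Set.Ioo (0 : ℝ) 1) (x y : lp (fun _ : ℕ => ℝ) p),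
      |u s x - u s y| ≤ (∑' n, (dseq α (n + 1))⁻¹ ^ a) * K * ‖x - y‖ ^ a := fun s =>
    abs_sub_le_mul_rpow_of_fixedPoint hc (fun n => (hα n).1.le) ha0 hd hK hA hι s.2.1.le
      s.2.2 (hfix s)
  refine ⟨holder, equicontinuous_of_dist_le_mul_rpow
    (L := (∑' n, (dseq α (n + 1))⁻¹ ^ a) * K) ha0 fun s x y => ?_⟩
  rw [Real.dist_eq, dist_eq_norm]
  exact holder s x y

theorem stmt15 (p : ENNReal) [Fact (1 ≤ p)] (hp : p ≠ ⊤)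
    (c c' : ℝ) (hc : 0 < c) (hcc : c < c')
    (α : ℕ → ℝ) (hα : ∀ n, α n ∈ Set.Ioo c c')
    (a : ℝ) (ha0 : 0 < a) (ha1 : a ≤ 1)
    (hd : Summable fun n => (dseq α (n + 1))⁻¹ ^ a)
    (m : Measure ℝ) [IsProbabilityMeasure m]
    (A : lp (fun _ : ℕ => ℝ) p →ᵇ ℝ) (K : ℝ) (hK : 0 ≤ K)
    (hA : ∀ x y : lp (fun _ : ℕ => ℝ) p, |A x - A y| ≤ K * ‖x - y‖ ^ a)
    (ι : ℝ → lp (fun _ : ℕ => ℝ) p → lp (fun _ : ℕ => ℝ) p)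
    (hι : ∀ (r : ℝ) (x : lp (fun _ : ℕ => ℝ) p) (n : ℕ),
      (ι r x : ∀ _ : ℕ, ℝ) n = if n = 0 then r else (x : ∀ _ : ℕ, ℝ) (n - 1) / α (n - 1))
    (u : Set.Ioo (0 : ℝ) 1 → (lp (fun _ : ℕ => ℝ) p →ᵇ ℝ))
    (hfix : ∀ (s : Set.Ioo (0 : ℝ) 1) (x : lp (fun _ : ℕ => ℝ) p),
      Real.exp (u s x) =
        ∫ r : ℝ, Real.exp (A (ι r x) + (s : ℝ) * u s (ι r x)) ∂m) :
    (∀ (s : Set.Ioo (0 : ℝ) 1) (x y : lp (fun _ : ℕ => ℝ) p),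
      |u s x - u s y| ≤ (∑' n, (dseq α (n + 1))⁻¹ ^ a) * K * ‖x - y‖ ^ a) ∧
    Equicontinuous (fun s : Set.Ioo (0 : ℝ) 1 => (u s : lp (fun _ : ℕ => ℝ) p → ℝ)) :=
  stmt15_general p c c' hc α hα a ha0 hd m A K hK hA ι hι u hfix
end

section
/- Let $(P, W)$ be a map on a set $\mathcal{P}$ with a metric $W$ bounded by 1, such that $W(P\mu, P\nu) \leq W(\mu,\nu)$ for all $\mu,\nu$, and such that for every pair $\mu,\nu$ with $W(\mu,\nu) > 0$ and every $\delta > 0$ there exist $n_0$ and $k$ with $W(P^{n+k}\mu, P^{n+k}\nu) \leq \theta(W(P^n\mu, P^n\nu))$ for all $n \geq n_0$, where $\theta(t) < t$ for $t > 0$ along the (monotone) limit. Then $\lim_{n\to\infty}W(P^n\mu, P^n\nu) = 0$ for all $\mu,\nu$; moreover if $(P^n\mu_0)_n$ has a convergent subsequence with limit $\mu^*$ and $P$ is continuous, then $P(\mu^*) = \mu^*$, $\mu^*$ is the unique fixed point of $P$, and $P^n\nu \to \mu^*$ for every $\nu$. -/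
/-!
Nonexpansiveness makes `n ↦ dist (Pⁿ μ) (Pⁿ ν)` decreasing, so it converges to some `L ≥ 0`.
Passing to the limit in `d (n + k) ≤ θ (d n)` gives `L ≤ θ L`, which forces `L = 0`. Along a
convergent subsequence of an orbit, `P (Pⁿ μ₀)` and `Pⁿ μ₀` then have the same limit, so by
continuity the limit is fixed; every orbit is attracted to it, and a second fixed point, having a
constant orbit, must coincide with it.
-/

open Filter Topology Function

lemma le_apply_of_tendsto_of_eventually_le_apply {d : ℕ → ℝ} {L : ℝ} {θ : ℝ → ℝ}
    (hθ : ContinuousAt θ L) (hd : Tendsto d atTop (𝓝 L)) (k : ℕ)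
    (hstep : ∀ᶠ n in atTop, d (n + k) ≤ θ (d n)) : L ≤ θ L :=
  le_of_tendsto_of_tendsto (hd.comp (tendsto_add_atTop_nat k)) (hθ.tendsto.comp hd) hstep

section Iterates

variable {X : Type*} {f : X → X}

lemma antitone_dist_iterate [PseudoMetricSpace X] (hf : ∀ x y, dist (f x) (f y) ≤ dist x y)
    (x y : X) : Antitone fun n => dist (f^[n] x) (f^[n] y) :=
  antitone_nat_of_succ_le fun n => by
    simpa only [iterate_succ_apply'] using hf (f^[n] x) (f^[n] y)

lemma tendsto_dist_iterate_zero [PseudoMetricSpace X] {θ : ℝ → ℝ}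
    (hf : ∀ x y, dist (f x) (f y) ≤ dist x y) (hθ : Continuous θ)
    (hθlt : ∀ t, 0 < t → θ t < t)
    (hcontr : ∀ x y, 0 < dist x y → ∃ n₀ k : ℕ, ∀ n ≥ n₀,
      dist (f^[n + k] x) (f^[n + k] y) ≤ θ (dist (f^[n] x) (f^[n] y)))
    (x y : X) : Tendsto (fun n => dist (f^[n] x) (f^[n] y)) atTop (𝓝 0) := by
  set d : ℕ → ℝ := fun n => dist (f^[n] x) (f^[n] y)
  have hbdd : BddBelow (Set.range d) := ⟨0, by rintro _ ⟨n, rfl⟩; exact dist_nonneg⟩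
  have hlim : Tendsto d atTop (𝓝 (⨅ n, d n)) :=
    tendsto_atTop_ciInf (antitone_dist_iterate hf x y) hbdd
  obtain hL | hL := (le_ciInf fun n => dist_nonneg : 0 ≤ ⨅ n, d n).eq_or_lt
  · rwa [← hL] at hlim
  obtain ⟨n₀, k, hk⟩ := hcontr x y (hL.trans_le (ciInf_le hbdd 0))
  have := le_apply_of_tendsto_of_eventually_le_apply hθ.continuousAt hlim k
    (eventually_atTop.2 ⟨n₀, hk⟩)
  exact absurd this (hθlt _ hL).not_ge

variable [MetricSpace X]

lemma isFixedPt_of_tendsto_iterate_comp {x₀ x : X} {φ : ℕ → ℕ} (hf : Continuous f)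
    (hsync : Tendsto (fun n => dist (f^[n] (f x₀)) (f^[n] x₀)) atTop (𝓝 0))
    (hφ : Tendsto φ atTop atTop) (hlim : Tendsto (fun k => f^[φ k] x₀) atTop (𝓝 x)) :
    IsFixedPt f x := by
  have hsync' : Tendsto (fun k => dist (f (f^[φ k] x₀)) (f^[φ k] x₀)) atTop (𝓝 0) := by
    simpa only [comp_def, ← iterate_succ_apply, iterate_succ_apply'] using hsync.comp hφ
  exact eq_of_dist_eq_zero <|
    tendsto_nhds_unique (((hf.tendsto x).comp hlim).dist hlim) hsync'

lemma tendsto_iterate_of_isFixedPt {x y : X} (hx : IsFixedPt f x)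
    (hsync : Tendsto (fun n => dist (f^[n] y) (f^[n] x)) atTop (𝓝 0)) :
    Tendsto (fun n => f^[n] y) atTop (𝓝 x) := by
  rw [tendsto_iff_dist_tendsto_zero]
  simpa only [hx.iterate _ |>.eq] using hsync

end Iterates

theorem stmt19_general (Y : Type*) [MetricSpace Y]
    (P : Y → Y)
    (hnonexp : ∀ μ ν : Y, dist (P μ) (P ν) ≤ dist μ ν)
    (θ : ℝ → ℝ) (hθcont : Continuous θ)
    (hθlt : ∀ t : ℝ, 0 < t → θ t < t)
    (hcontr : ∀ μ ν : Y, 0 < dist μ ν → ∀ δ : ℝ, 0 < δ →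
      ∃ n₀ k : ℕ, ∀ n ≥ n₀,
        dist (P^[n + k] μ) (P^[n + k] ν) ≤ θ (dist (P^[n] μ) (P^[n] ν))) :
    (∀ μ ν : Y, Tendsto (fun n : ℕ => dist (P^[n] μ) (P^[n] ν)) atTop (nhds 0)) ∧
    (Continuous P →
      ∀ (μ₀ μstar : Y) (φ : ℕ → ℕ), StrictMono φ →
        Tendsto (fun k : ℕ => P^[φ k] μ₀) atTop (nhds μstar) →
        P μstar = μstar ∧
        (∀ ν : Y, Tendsto (fun n : ℕ => P^[n] ν) atTop (nhds μstar)) ∧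
        (∀ μ' : Y, P μ' = μ' → μ' = μstar)) := by
  have hsync := tendsto_dist_iterate_zero hnonexp hθcont hθlt
    fun μ ν hμν => hcontr μ ν hμν 1 one_pos
  refine ⟨hsync, fun hP μ₀ μstar φ hφ hlim => ?_⟩
  have hfix : IsFixedPt P μstar :=
    isFixedPt_of_tendsto_iterate_comp hP (hsync _ _) hφ.tendsto_atTop hlim
  have hattract ν := tendsto_iterate_of_isFixedPt hfix (hsync ν μstar)
  refine ⟨hfix, hattract, fun μ' hμ' => tendsto_nhds_unique ?_ (hattract μ')⟩
  simpa only [(IsFixedPt.iterate hμ' _).eq] using tendsto_const_nhds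

theorem stmt19 (Y : Type*) [MetricSpace Y]
    (hbdd : ∀ μ ν : Y, dist μ ν ≤ 1)
    (P : Y → Y)
    (hnonexp : ∀ μ ν : Y, dist (P μ) (P ν) ≤ dist μ ν)
    (θ : ℝ → ℝ) (hθmono : Monotone θ) (hθcont : Continuous θ)
    (hθlt : ∀ t : ℝ, 0 < t → θ t < t)
    (hcontr : ∀ μ ν : Y, 0 < dist μ ν → ∀ δ : ℝ, 0 < δ →
      ∃ n₀ k : ℕ, ∀ n ≥ n₀,
        dist (P^[n + k] μ) (P^[n + k] ν) ≤ θ (dist (P^[n] μ) (P^[n] ν))) :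
    (∀ μ ν : Y, Tendsto (fun n : ℕ => dist (P^[n] μ) (P^[n] ν)) atTop (nhds 0)) ∧
    (Continuous P →
      ∀ (μ₀ μstar : Y) (φ : ℕ → ℕ), StrictMono φ →
        Tendsto (fun k : ℕ => P^[φ k] μ₀) atTop (nhds μstar) →
        P μstar = μstar ∧
        (∀ ν : Y, Tendsto (fun n : ℕ => P^[n] ν) atTop (nhds μstar)) ∧
        (∀ μ' : Y, P μ' = μ' → μ' = μstar)) :=
  stmt19_general Y P hnonexp θ hθcont hθlt hcontr
end
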